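/- arXiv:2402.14927 — 8 statements merged into one kernel-verified Lean document; each statement's English description precedes it below -/
import Mathlib

section
/- Let G be a finite simple graph with vertex set [n] = {1,…,n}, let k ≤ n, and let 𝔽 be the finite field with 2^{k+2} elements. Then there exists a matrix A' ∈ 𝔽^{n×n} such that for every S ⊆ {1,…,k}: the graph G − S has a perfect matching if and only if the determinant of the principal submatrix of A' whose rows and columns are indexed by [n] ∖ S is nonzero. -/
/-!
Let `A_x` be the symmetric matrix carrying a weight `x_e` on every edge `e` of `G`. In
characteristic 2 the determinant of a symmetric matrix is the sum over involutions `σ` of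
`∏ A i (σ i)`, so `det A_x[D]` is the value at `x` of the polynomial `p_D = ∑_M ∏_{e ∈ M} x_e²`,
summed over the perfect matchings `M` of `G[D]`. Thus `p_D ≠ 0` iff `G[D]` has a perfect matching,
and `p_D` has degree at most 2 in each variable. The product of the nonzero `p_D` over the `2^k`
sets `D = [n] ∖ S` has degree `≤ 2^(k+1) < 2^(k+2) = |𝔽|` in each variable, so it does not vanish
at some `x`, and this single `A_x` works for every `S`.
-/

/-- A graph has a perfect matching if some subgraph of it is a perfect matching. -/
def HasPerfectMatching {V : Type} (G : SimpleGraph V) : Prop :=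
  ∃ M : G.Subgraph, M.IsPerfectMatching

open Finset Equiv MvPolynomial

universe u

namespace MvPolynomial

-- One universe, as in `MvPolynomial.eq_zero_of_eval_eq_zero`.
variable {K σ : Type u} [Field K] [Finite K] [Finite σ]

theorem exists_eval_ne_zero_of_degreeOf_lt {p : MvPolynomial σ K} (hp : p ≠ 0)
    (hdeg : ∀ i, degreeOf i p < Nat.card K) : ∃ x, eval x p ≠ 0 := by
  have := Fintype.ofFinite K
  by_contra! h
  refine hp (eq_zero_of_eval_eq_zero σ K p h ((mem_restrictDegree _ _ _).mpr fun m hm i => ?_))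
  rw [← Nat.card_eq_fintype_card]
  exact (degreeOf_le_iff.mp le_rfl m hm).trans (Nat.le_sub_one_of_lt (hdeg i))

theorem exists_forall_eval_ne_zero {ι : Type*} (s : Finset ι) (p : ι → MvPolynomial σ K) (d : ℕ)
    (hdeg : ∀ i ∈ s, ∀ j, degreeOf j (p i) ≤ d) (hcard : #s * d < Nat.card K) :
    ∃ x, ∀ i ∈ s, p i ≠ 0 → eval x (p i) ≠ 0 := by
  classical
  set t := s.filter (p · ≠ 0)
  have hQ : ∏ i ∈ t, p i ≠ 0 := prod_ne_zero_iff.mpr fun i hi => (mem_filter.mp hi).2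
  have hQdeg (j : σ) : degreeOf j (∏ i ∈ t, p i) < Nat.card K := calc
    degreeOf j (∏ i ∈ t, p i) ≤ ∑ i ∈ t, degreeOf j (p i) := degreeOf_prod_le j t p
    _ ≤ #t * d := sum_le_card_nsmul _ _ _ fun i hi => hdeg i (mem_filter.mp hi).1 j
    _ ≤ #s * d := Nat.mul_le_mul_right d (card_filter_le s _)
    _ < Nat.card K := hcard
  obtain ⟨x, hx⟩ := exists_eval_ne_zero_of_degreeOf_lt hQ hQdeg
  refine ⟨x, fun i hi hpi => ?_⟩
  rw [map_prod, prod_ne_zero_iff] at hx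
  exact hx i (mem_filter.mpr ⟨hi, hpi⟩)

end MvPolynomial

namespace Matrix

theorem det_eq_sum_involutions_of_isSymm {n R : Type*} [Fintype n] [DecidableEq n] [CommRing R]
    [CharP R 2] {A : Matrix n n R} (hA : A.IsSymm) :
    A.det = ∑ σ ∈ univ.filter (fun σ : Perm n => σ * σ = 1), ∏ i, A i (σ i) := by
  have sign_eq_one (σ : Perm n) : ((Perm.sign σ : ℤ) : R) = 1 := by
    rcases Int.units_eq_one_or (Perm.sign σ) with h | h <;> simp [h, CharTwo.neg_eq]
  have prod_inv (σ : Perm n) : ∏ i, A i (σ⁻¹ i) = ∏ i, A i (σ i) := by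
    rw [← Equiv.prod_comp σ (fun i => A i (σ⁻¹ i))]
    simp [hA.apply]
  -- Signs are `1` in characteristic 2 and `σ`, `σ⁻¹` give the same product, so the
  -- non-involutions cancel in pairs.
  rw [det_apply', ← sum_filter_add_sum_filter_not univ (fun σ : Perm n => σ * σ = 1)]
  simp only [sign_eq_one, one_mul, hA.apply, add_eq_left]
  refine sum_involution (fun σ _ => σ⁻¹) (fun σ _ => by rw [prod_inv, CharTwo.add_self_eq_zero])
    (fun σ hσ _ h => ?_) (fun σ hσ => ?_) (fun σ _ => inv_inv σ)
  · exact (mem_filter.mp hσ).2 (by simpa [h] using mul_inv_cancel σ)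
  · rw [mem_filter, ← _root_.mul_inv_rev, inv_eq_one]
    exact ⟨mem_univ _, (mem_filter.mp hσ).2⟩

end Matrix

theorem Sym2.card_filter_mem_le_two {V W : Type*} [Fintype W] [DecidableEq V] {f : W → V}
    (hf : Function.Injective f) (e : Sym2 V) : #{w | f w ∈ e} ≤ 2 := by
  induction e using Sym2.ind with
  | _ a b =>
    refine (card_le_card_of_injOn f (t := {a, b}) (fun w hw => ?_) hf.injOn).trans card_le_two
    simpa using hw

namespace Equiv.Perm

theorem eq_of_forall_exists_sym2_eq {W : Type*} {σ τ : Perm W} (hτ : τ * τ = 1)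
    (h : ∀ v, ∃ w, s(v, σ v) = s(w, τ w)) : σ = τ := by
  ext v
  obtain ⟨w, hw⟩ := h v
  rcases Sym2.eq_iff.mp hw with ⟨rfl, h⟩ | ⟨rfl, h⟩
  · exact h
  · rw [h, ← Perm.mul_apply, hτ, Perm.one_apply]

end Equiv.Perm

namespace SimpleGraph

variable {V W : Type}

open Classical in
noncomputable def weightedAdjMatrix {R : Type*} [Zero R] (G : SimpleGraph V) (x : Sym2 V → R) :
    Matrix V V R :=
  Matrix.of fun u v => if G.Adj u v then x s(u, v) else 0

theorem isSymm_weightedAdjMatrix {R : Type*} [Zero R] (G : SimpleGraph V) (x : Sym2 V → R) :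
    (G.weightedAdjMatrix x).IsSymm := by
  refine Matrix.IsSymm.ext fun u v => ?_
  simp only [weightedAdjMatrix, Matrix.of_apply]
  rw [G.adj_comm, Sym2.eq_swap]

theorem weightedAdjMatrix_submatrix_val {R : Type*} [Zero R] (G : SimpleGraph V)
    (x : Sym2 V → R) (s : Set V) :
    (G.weightedAdjMatrix x).submatrix (↑) (↑) =
      (G.induce s).weightedAdjMatrix (x ∘ Sym2.map (↑)) := by
  ext u v
  simp only [weightedAdjMatrix, Matrix.submatrix_apply, Matrix.of_apply, Function.comp_apply,
    Sym2.map_mk]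
  rfl

variable [Fintype W]

open Classical in
noncomputable def matchingInvolutions (H : SimpleGraph W) : Finset (Perm W) :=
  {σ | σ * σ = 1 ∧ ∀ v, H.Adj v (σ v)}

theorem mem_matchingInvolutions {H : SimpleGraph W} {σ : Perm W} :
    σ ∈ H.matchingInvolutions ↔ σ * σ = 1 ∧ ∀ v, H.Adj v (σ v) := by
  simp [matchingInvolutions]

theorem hasPerfectMatching_iff_nonempty_matchingInvolutions (H : SimpleGraph W) :
    HasPerfectMatching H ↔ H.matchingInvolutions.Nonempty := by
  simp only [Finset.Nonempty, mem_matchingInvolutions]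
  constructor
  · rintro ⟨M, hM⟩
    rw [Subgraph.isPerfectMatching_iff] at hM
    choose f hf using fun v => (hM v).exists
    have hinv : Function.Involutive f := fun v => (hM (f v)).unique (hf (f v)) (hf v).symm
    exact ⟨hinv.toPerm, Equiv.ext hinv, fun v => M.adj_sub (hf v)⟩
  · rintro ⟨τ, hτ, hadj⟩
    have hinv (v : W) : τ (τ v) = v := congrArg (· v) hτ
    refine ⟨{ verts := Set.univ
              Adj := fun a b => τ a = b
              adj_sub := by rintro a b rfl; exact hadj a
              edge_vert := fun _ => Set.mem_univ _
              symm := ⟨fun a b h => by rw [← h, hinv]⟩ }, ?_⟩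
    rw [Subgraph.isPerfectMatching_iff]
    exact fun v => ⟨τ v, rfl, fun w hw => Eq.symm hw⟩

theorem det_weightedAdjMatrix {R : Type*} [CommRing R] [CharP R 2] [DecidableEq W]
    (H : SimpleGraph W) (y : Sym2 W → R) :
    (H.weightedAdjMatrix y).det = ∑ τ ∈ H.matchingInvolutions, ∏ v, y s(v, τ v) := by
  rw [Matrix.det_eq_sum_involutions_of_isSymm (isSymm_weightedAdjMatrix H y)]
  simp only [weightedAdjMatrix, Matrix.of_apply, Fintype.prod_ite_zero]
  rw [← sum_filter, filter_filter]
  exact sum_congr (by ext; simp [mem_matchingInvolutions]) fun _ _ => rfl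

section MatchingPoly

variable (R : Type*) [CommSemiring R] (G : SimpleGraph V) (s : Set V) [Fintype s]

noncomputable def matchingPoly : MvPolynomial (Sym2 V) R :=
  ∑ τ ∈ (G.induce s).matchingInvolutions, ∏ v : s, X s(↑v, ↑(τ v))

theorem eval_matchingPoly (x : Sym2 V → R) :
    eval x (G.matchingPoly R s) =
      ∑ τ ∈ (G.induce s).matchingInvolutions, ∏ v : s, x s(↑v, ↑(τ v)) := by
  simp [matchingPoly]

theorem degreeOf_matchingPoly_le [Nontrivial R] (e : Sym2 V) :
    degreeOf e (G.matchingPoly R s) ≤ 2 := by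
  classical
  refine (degreeOf_sum_le _ _ _).trans (Finset.sup_le fun τ _ => (degreeOf_prod_le _ _ _).trans ?_)
  simp only [degreeOf_X, sum_boole, Nat.cast_id]
  refine (card_le_card fun v => ?_).trans (Sym2.card_filter_mem_le_two Subtype.val_injective e)
  simp only [mem_filter, mem_univ, true_and]
  rintro rfl
  exact Sym2.mem_mk_left _ _

theorem hasPerfectMatching_induce_iff_matchingPoly_ne_zero [Nontrivial R] :
    HasPerfectMatching (G.induce s) ↔ G.matchingPoly R s ≠ 0 := by
  classical
  rw [hasPerfectMatching_iff_nonempty_matchingInvolutions]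
  constructor
  · rintro ⟨τ, hτ⟩
    -- At the indicator of the edges of `τ`, only `τ` itself contributes to the sum.
    let x : Sym2 V → R := fun e => if ∃ w, Sym2.map Subtype.val s(w, τ w) = e then 1 else 0
    have hx (σ : Perm s) : ∏ v : s, x s(↑v, ↑(σ v)) = if σ = τ then 1 else 0 := by
      have uses_only_edges_of_τ :
          (∀ v : s, ∃ w, Sym2.map Subtype.val s(w, τ w) = s(↑v, ↑(σ v))) ↔ σ = τ := by
        refine ⟨fun h => Perm.eq_of_forall_exists_sym2_eq (mem_matchingInvolutions.mp hτ).1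
          fun v => ?_, by rintro rfl v; exact ⟨v, rfl⟩⟩
        obtain ⟨w, hw⟩ := h v
        exact ⟨w, Sym2.map.injective Subtype.val_injective hw.symm⟩
      rw [Fintype.prod_boole]
      exact if_congr uses_only_edges_of_τ rfl rfl
    refine ne_of_apply_ne (eval x) ?_
    rw [eval_matchingPoly, map_zero]
    simp [hx, hτ]
  · intro hne
    by_contra h
    rw [not_nonempty_iff_eq_empty] at h
    exact hne (by simp [matchingPoly, h])

end MatchingPoly

theorem det_submatrix_weightedAdjMatrix {R : Type*} [CommRing R] [CharP R 2] [DecidableEq V]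
    (G : SimpleGraph V) (s : Set V) [Fintype s] (x : Sym2 V → R) :
    ((G.weightedAdjMatrix x).submatrix ((↑) : s → V) (↑)).det = eval x (G.matchingPoly R s) := by
  rw [weightedAdjMatrix_submatrix_val, det_weightedAdjMatrix, eval_matchingPoly]
  rfl

end SimpleGraph

/-- Let `G` be a graph on `[n]`, let `k ≤ n`, and let `𝔽` be the field with `2^(k+2)`
elements.  There is a matrix `A' ∈ 𝔽^{n×n}` such that for every `S ⊆ [k]`, the graph
`G − S` has a perfect matching iff the determinant of the principal submatrix of `A'`
indexed by `[n] ∖ S` is nonzero. -/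
theorem exists_matrix_det_detects_perfect_matching (n k : ℕ) (hk : k ≤ n)
    (G : SimpleGraph (Fin n)) :
    ∃ A' : Matrix (Fin n) (Fin n) (GaloisField 2 (k + 2)),
      ∀ S : Finset (Fin k),
        HasPerfectMatching (G.induce {v : Fin n | v ∉ S.image (Fin.castLE hk)}) ↔
          (A'.submatrix
              (fun v : ↥(Finset.univ \ S.image (Fin.castLE hk)) => (v : Fin n))
              (fun v : ↥(Finset.univ \ S.image (Fin.castLE hk)) => (v : Fin n))).det ≠ 0 := by
  let D (S : Finset (Fin k)) : Set (Fin n) := ↑(univ \ S.image (Fin.castLE hk))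
  have hcard : #(univ : Finset (Finset (Fin k))) * 2 < Nat.card (GaloisField 2 (k + 2)) := by
    rw [GaloisField.card 2 (k + 2) (by omega), card_univ, Fintype.card_finset, Fintype.card_fin,
      pow_succ, pow_succ]
    have := Nat.two_pow_pos k
    omega
  obtain ⟨x, hx⟩ := exists_forall_eval_ne_zero univ (fun S => G.matchingPoly _ (D S)) 2
    (fun S _ => G.degreeOf_matchingPoly_le _ (D S)) hcard
  refine ⟨G.weightedAdjMatrix x, fun S => ?_⟩
  have hD : {v : Fin n | v ∉ S.image (Fin.castLE hk)} = D S := by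
    ext
    simp [D]
  have hdet := G.det_submatrix_weightedAdjMatrix (D S) x
  rw [hD, G.hasPerfectMatching_induce_iff_matchingPoly_ne_zero (GaloisField 2 (k + 2))]
  exact ⟨fun hp => hdet.trans_ne (hx S (mem_univ S) hp),
    fun h hp => h (hdet.trans (by rw [hp, map_zero]))⟩
end

section
/- Let G be a finite simple graph on n vertices and let j ≥ 0 be an integer. Let H be the graph obtained from G by adding j new vertices that are pairwise nonadjacent and each adjacent to every vertex of G. Then H has a perfect matching if and only if j ≤ n, n − j is even, and ν(G) ≥ (n − j)/2. -/
noncomputable def matchingNumber {V : Type} (G : SimpleGraph V) : ℕ :=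
  sSup {n : ℕ | ∃ M : G.Subgraph, M.IsMatching ∧ M.edgeSet.ncard = n}

namespace SimpleGraph.Subgraph

variable {V : Type*} {G : SimpleGraph V} {M : G.Subgraph}

lemma IsMatching.ncard_verts [Finite V] (hM : M.IsMatching) :
    M.verts.ncard = 2 * M.edgeSet.ncard := by
  classical
  have := Fintype.ofFinite V
  have hsum : Fintype.card M.verts = 2 * M.coe.edgeFinset.card := by
    rw [← M.coe.sum_degrees_eq_twice_card_edges]
    have hdeg : ∀ v ∈ M.verts, M.degree v = 1 := isMatching_iff_forall_degree.mp hM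
    simp only [coe_degree]
    -- `convert` bridges the two `Fintype` instances on the neighbour sets
    rw [Finset.sum_congr rfl fun v _ => by convert hdeg v v.2]
    simp
  rw [← Nat.card_coe_set_eq, Nat.card_eq_fintype_card, hsum, edgeFinset_card,
    ← Nat.card_eq_fintype_card, Nat.card_coe_set_eq, ← M.image_coe_edgeSet_coe,
    Set.ncard_image_of_injective _ (Sym2.map.injective Subtype.coe_injective)]

lemma IsMatching.exists_edgeSet_eq_of_subset (hM : M.IsMatching) {E : Set (Sym2 V)}
    (hE : E ⊆ M.edgeSet) : ∃ M' : G.Subgraph, M'.IsMatching ∧ M'.edgeSet = E := by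
  refine ⟨{ verts := {v | ∃ e ∈ E, v ∈ e}
            Adj := fun v w => s(v, w) ∈ E
            adj_sub := fun h => M.adj_sub (hE h)
            edge_vert := fun h => ⟨_, h, Sym2.mem_mk_left _ _⟩
            symm := ⟨fun v w h => Sym2.eq_swap ▸ h⟩ }, ?_, ?_⟩
  · rintro v ⟨e, he, hve⟩
    obtain ⟨w, rfl⟩ := Sym2.mem_iff_exists.mp hve
    exact ⟨w, he, fun u hu => hM.eq_of_adj_left (hE hu) (hE he)⟩
  · ext e
    induction e
    rfl

lemma IsMatching.isPerfectMatching_sup {M' : G.Subgraph} (hM : M.IsMatching)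
    (hM' : M'.IsMatching) (h : IsCompl M.verts M'.verts) : (M ⊔ M').IsPerfectMatching := by
  refine ⟨hM.sup hM' ?_, fun v => ?_⟩
  · rw [hM.support_eq_verts, hM'.support_eq_verts]
    exact h.disjoint
  · exact h.codisjoint.top_le (Set.mem_univ v)

end SimpleGraph.Subgraph

namespace SimpleGraph

variable {V : Type} [Finite V] {G : SimpleGraph V}

lemma bddAbove_ncard_edgeSet_isMatching :
    BddAbove {n : ℕ | ∃ M : G.Subgraph, M.IsMatching ∧ M.edgeSet.ncard = n} :=
  ⟨Nat.card (Sym2 V), by rintro _ ⟨M, -, rfl⟩; exact Set.ncard_le_card _⟩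

lemma Subgraph.IsMatching.ncard_edgeSet_le_matchingNumber {M : G.Subgraph} (hM : M.IsMatching) :
    M.edgeSet.ncard ≤ matchingNumber G :=
  le_csSup bddAbove_ncard_edgeSet_isMatching ⟨M, hM, rfl⟩

lemma exists_isMatching_ncard_edgeSet_eq_matchingNumber :
    ∃ M : G.Subgraph, M.IsMatching ∧ M.edgeSet.ncard = matchingNumber G :=
  Nat.sSup_mem (s := {n | ∃ M : G.Subgraph, M.IsMatching ∧ M.edgeSet.ncard = n})
    ⟨_, ⊥, fun _ h => h.elim, rfl⟩ bddAbove_ncard_edgeSet_isMatching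

lemma exists_isMatching_ncard_edgeSet_eq_of_le_matchingNumber {k : ℕ}
    (hk : k ≤ matchingNumber G) : ∃ M : G.Subgraph, M.IsMatching ∧ M.edgeSet.ncard = k := by
  obtain ⟨M, hM, hMν⟩ := exists_isMatching_ncard_edgeSet_eq_matchingNumber (G := G)
  obtain ⟨E, hEM, rfl⟩ := Set.exists_subset_card_eq (hk.trans_eq hMν.symm)
  obtain ⟨M', hM', rfl⟩ := hM.exists_edgeSet_eq_of_subset hEM
  exact ⟨M', hM', rfl⟩

lemma exists_isMatching_ncard_compl_verts_eq_iff {j : ℕ} :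
    (∃ M : G.Subgraph, M.IsMatching ∧ M.vertsᶜ.ncard = j) ↔
      j ≤ Nat.card V ∧ Even (Nat.card V - j) ∧ (Nat.card V - j) / 2 ≤ matchingNumber G := by
  have hsplit (M : G.Subgraph) := Set.ncard_add_ncard_compl M.verts
  constructor
  · rintro ⟨M, hM, rfl⟩
    have := hsplit M
    have := hM.ncard_verts
    have := hM.ncard_edgeSet_le_matchingNumber
    exact ⟨by omega, ⟨M.edgeSet.ncard, by omega⟩, by omega⟩
  · rintro ⟨hj, ⟨k, hk⟩, hν⟩
    obtain ⟨M, hM, hMk⟩ := exists_isMatching_ncard_edgeSet_eq_of_le_matchingNumber (G := G)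
      (by omega)
    have := hsplit M
    have := hM.ncard_verts
    exact ⟨M, hM, by omega⟩

end SimpleGraph

namespace SimpleGraph.Subgraph

open Sum

variable {V W : Type} {G : SimpleGraph V} {H : SimpleGraph (V ⊕ W)}

def inlPart (hGH : ∀ u v, H.Adj (inl u) (inl v) → G.Adj u v) (M : H.Subgraph) :
    G.Subgraph where
  verts := {v | ∃ w, M.Adj (inl v) (inl w)}
  Adj v w := M.Adj (inl v) (inl w)
  adj_sub h := hGH _ _ (M.adj_sub h)
  edge_vert h := ⟨_, h⟩
  symm := ⟨fun _ _ h => h.symm⟩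

variable {M : H.Subgraph} {hGH : ∀ u v, H.Adj (inl u) (inl v) → G.Adj u v}

lemma IsMatching.inlPart (hM : M.IsMatching) : (inlPart hGH M).IsMatching := by
  rintro v ⟨w, hw⟩
  exact ⟨w, hw, fun u hu => inl_injective (hM.eq_of_adj_left hu hw)⟩

lemma IsPerfectMatching.nonempty_compl_verts_inlPart_equiv (hM : M.IsPerfectMatching)
    (hindep : ∀ a b : W, ¬ H.Adj (inr a) (inr b)) :
    Nonempty (↥(inlPart hGH M).vertsᶜ ≃ W) := by
  have hpartner (a : W) : ∃ v, M.Adj (inr a) (inl v) := by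
    obtain ⟨x, hx, -⟩ := isPerfectMatching_iff.mp hM (inr a)
    cases x with
    | inl v => exact ⟨v, hx⟩
    | inr b => exact absurd (M.adj_sub hx) (hindep a b)
  choose g hg using hpartner
  have hg_inj : Function.Injective g := fun a b hab =>
    inr_injective (hM.1.eq_of_adj_right (hg a) (hab ▸ hg b))
  have hrange : (inlPart hGH M).vertsᶜ = Set.range g := by
    ext v
    constructor
    · intro hv
      obtain ⟨x, hx, -⟩ := isPerfectMatching_iff.mp hM (inl v)
      cases x with
      | inl w => exact absurd ⟨w, hx⟩ hv
      | inr a => exact ⟨a, inl_injective (hM.1.eq_of_adj_left (hg a) hx.symm)⟩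
    · rintro ⟨a, rfl⟩ ⟨w, hw⟩
      exact inl_ne_inr (hM.1.eq_of_adj_left hw (hg a).symm)
  exact ⟨(Equiv.setCongr hrange).trans (Equiv.ofInjective g hg_inj).symm⟩

end SimpleGraph.Subgraph

open SimpleGraph Subgraph Sum

theorem hasPerfectMatching_of_isMatching_of_compl_equiv
    {V W : Type} {G : SimpleGraph V} {H : SimpleGraph (V ⊕ W)}
    (hGH : ∀ u v, G.Adj u v → H.Adj (inl u) (inl v)) (hjoin : ∀ u a, H.Adj (inl u) (inr a))
    {M : G.Subgraph} (hM : M.IsMatching) (e : ↥M.vertsᶜ ≃ W) : HasPerfectMatching H := by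
  let f : G →g H := ⟨inl, hGH _ _⟩
  let e' : ↥(inl '' M.vertsᶜ : Set (V ⊕ W)) ≃ Set.range (inr : W → V ⊕ W) :=
    ((Equiv.Set.image inl _ inl_injective).symm.trans e).trans
      (Equiv.ofInjective (inr : W → V ⊕ W) inr_injective)
  obtain ⟨M', hM'verts, hM'⟩ := IsMatching.exists_of_disjoint_sets_of_equiv
    (Set.isCompl_range_inl_range_inr.disjoint.mono_left (Set.image_subset_range _ _)) e'
    (by rintro ⟨_, u, hu, rfl⟩; simpa [e'] using hjoin u _)
  refine ⟨_, (hM.map f inl_injective).isPerfectMatching_sup hM' ?_⟩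
  rw [map_verts, hM'verts]
  refine ⟨Set.disjoint_left.mpr ?_, codisjoint_iff.mpr (Set.eq_univ_of_forall ?_)⟩
  · rintro _ ⟨u, hu, rfl⟩
    simpa [f] using hu
  · rintro (u | a)
    · by_cases hu : u ∈ M.verts <;> simp [f, hu]
    · simp

theorem hasPerfectMatching_iff_exists_isMatching_compl_equiv {V W : Type} {G : SimpleGraph V}
    {H : SimpleGraph (V ⊕ W)} (hGG : ∀ u v, H.Adj (inl u) (inl v) ↔ G.Adj u v)
    (hjoin : ∀ u a, H.Adj (inl u) (inr a)) (hindep : ∀ a b : W, ¬ H.Adj (inr a) (inr b)) :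
    HasPerfectMatching H ↔ ∃ M : G.Subgraph, M.IsMatching ∧ Nonempty (↥M.vertsᶜ ≃ W) := by
  constructor
  · rintro ⟨M, hM⟩
    exact ⟨_, hM.1.inlPart (hGH := fun u v => (hGG u v).1),
      hM.nonempty_compl_verts_inlPart_equiv hindep⟩
  · rintro ⟨M, hM, ⟨e⟩⟩
    exact hasPerfectMatching_of_isMatching_of_compl_equiv (fun u v => (hGG u v).2) hjoin hM e

/-- Let `G` be a graph on `n` vertices, and let `H` be obtained from `G` by adding `j`
new pairwise nonadjacent vertices, each adjacent to every vertex of `G`.  Then `H` has a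
perfect matching iff `j ≤ n`, `n − j` is even, and `ν(G) ≥ (n − j)/2`. -/
theorem perfect_matching_of_add_universal_vertices {V : Type} [Fintype V] (n j : ℕ)
    (hn : Fintype.card V = n) (G : SimpleGraph V) (H : SimpleGraph (V ⊕ Fin j))
    (hGG : ∀ u v : V, H.Adj (Sum.inl u) (Sum.inl v) ↔ G.Adj u v)
    (hjoin : ∀ (u : V) (a : Fin j), H.Adj (Sum.inl u) (Sum.inr a))
    (hindep : ∀ a b : Fin j, ¬ H.Adj (Sum.inr a) (Sum.inr b)) :
    HasPerfectMatching H ↔ j ≤ n ∧ Even (n - j) ∧ (n - j) / 2 ≤ matchingNumber G := by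
  subst hn
  rw [hasPerfectMatching_iff_exists_isMatching_compl_equiv hGG hjoin hindep,
    ← Nat.card_eq_fintype_card, ← exists_isMatching_ncard_compl_verts_eq_iff]
  simp_rw [← Finite.card_eq, Nat.card_coe_set_eq, Nat.card_fin]
end

section
/- Let (G,U,k,ℓ) be an instance of Cycle-HitPack and let F be a feedback vertex set of G. Then (G,U,k,ℓ) is a Yes-instance if and only if there exists a set F' ⊆ F ∖ U with |F'| ≤ k such that (G − F', U ∪ (F ∖ F'), k − |F'|, ℓ) is a Yes-instance. -/
/-- The graph `G − S`: delete the vertices of `S` (keeping the ambient vertex type,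
all edges incident to `S` are removed, so the deleted vertices become isolated and in
particular lie on no cycle). -/
def deleteVertices {V : Type} (G : SimpleGraph V) (S : Finset V) : SimpleGraph V where
  Adj u v := G.Adj u v ∧ u ∉ S ∧ v ∉ S
  symm := ⟨fun _ _ h => ⟨h.1.symm, h.2.2, h.2.1⟩⟩
  loopless := ⟨fun u h => G.loopless.irrefl u h.1⟩

/-- `G` contains `ℓ` pairwise vertex-disjoint cycles. -/
def HasCyclePacking {V : Type} (G : SimpleGraph V) (ℓ : ℕ) : Prop :=
  ∃ l : List (Σ v : V, G.Walk v v), l.length = ℓ ∧ (∀ p ∈ l, p.2.IsCycle) ∧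
    l.Pairwise fun p q => ∀ x : V, x ∈ p.2.support → x ∈ q.2.support → False

/-- `(G,U,k,ℓ)` is a Yes-instance of Cycle-HitPack: there is a set `S` of at most `k`
deletable vertices such that `G − S` has no `ℓ` pairwise vertex-disjoint cycles. -/
def IsYesInstance {V : Type} (G : SimpleGraph V) (U : Finset V) (k ℓ : ℕ) : Prop :=
  ∃ S : Finset V, (∀ x ∈ S, x ∉ U) ∧ S.card ≤ k ∧
    ¬ HasCyclePacking (deleteVertices G S) ℓ

/-- `F` is a feedback vertex set of `G`: it meets every cycle of `G`. -/
def IsFeedbackVertexSet {V : Type} (G : SimpleGraph V) (F : Finset V) : Prop :=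
  ∀ ⦃v : V⦄ (c : G.Walk v v), c.IsCycle → ∃ x ∈ F, x ∈ c.support

/-! A solution `S` splits as `(S ∩ F) ∪ (S ∖ F)`: guessing `F' = S ∩ F`, the rest `S ∖ F'`
solves the reduced instance, since it avoids `F ∖ F'`. Conversely, a guess `F'` together with a
solution `S'` of the reduced instance gives the solution `F' ∪ S'`. -/

theorem deleteVertices_deleteVertices {V : Type} [DecidableEq V] (G : SimpleGraph V)
    (A B : Finset V) : deleteVertices (deleteVertices G A) B = deleteVertices G (A ∪ B) := by
  ext u v
  simp only [deleteVertices, Finset.mem_union]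
  tauto

section

variable {V : Type} [DecidableEq V] {G : SimpleGraph V} {U : Finset V} {k ℓ : ℕ}

theorem isYesInstance_deleteVertices_of_subset {S T U' : Finset V} (hSk : S.card ≤ k)
    (hS : ¬ HasCyclePacking (deleteVertices G S) ℓ) (hTS : T ⊆ S)
    (hU' : ∀ x ∈ S \ T, x ∉ U') :
    IsYesInstance (deleteVertices G T) U' (k - T.card) ℓ := by
  refine ⟨S \ T, hU', ?_, ?_⟩
  · rw [Finset.card_sdiff_of_subset hTS]
    omega
  · rwa [deleteVertices_deleteVertices, Finset.union_sdiff_of_subset hTS]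

theorem IsYesInstance.of_deleteVertices {T U' : Finset V} (hTU : ∀ x ∈ T, x ∉ U)
    (hTk : T.card ≤ k) (hUU' : U ⊆ U')
    (h : IsYesInstance (deleteVertices G T) U' (k - T.card) ℓ) : IsYesInstance G U k ℓ := by
  obtain ⟨S, hSU', hSk, hS⟩ := h
  refine ⟨T ∪ S, ?_, ?_, ?_⟩
  · simp only [Finset.mem_union]
    rintro x (hxT | hxS)
    exacts [hTU x hxT, fun hxU => hSU' x hxS (hUU' hxU)]
  · calc (T ∪ S).card ≤ T.card + S.card := Finset.card_union_le _ _
      _ ≤ k := by omega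
  · rwa [deleteVertices_deleteVertices] at hS

end

theorem yes_iff_exists_guess_on_fvs_general {V : Type} [DecidableEq V]
    (G : SimpleGraph V) (U F : Finset V) (k ℓ : ℕ) :
    IsYesInstance G U k ℓ ↔
      ∃ F' : Finset V, F' ⊆ F \ U ∧ F'.card ≤ k ∧
        IsYesInstance (deleteVertices G F') (U ∪ (F \ F')) (k - F'.card) ℓ := by
  constructor
  · rintro ⟨S, hSU, hSk, hS⟩
    have hSF : S ∩ F ⊆ S := Finset.inter_subset_left
    refine ⟨S ∩ F, fun x hx => ?_, (Finset.card_le_card hSF).trans hSk,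
      isYesInstance_deleteVertices_of_subset hSk hS hSF fun x hx => ?_⟩
    · rw [Finset.mem_inter] at hx
      exact Finset.mem_sdiff.2 ⟨hx.2, hSU x hx.1⟩
    · simp only [Finset.mem_sdiff, Finset.mem_inter, Finset.mem_union] at hx ⊢
      tauto
  · rintro ⟨F', hF'U, hF'k, h⟩
    exact h.of_deleteVertices (fun x hx => (Finset.mem_sdiff.1 (hF'U hx)).2) hF'k
      Finset.subset_union_left

/-- An instance `(G,U,k,ℓ)` of Cycle-HitPack with feedback vertex set `F` is a
Yes-instance iff there is some `F' ⊆ F ∖ U` with `|F'| ≤ k` such that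
`(G − F', U ∪ (F ∖ F'), k − |F'|, ℓ)` is a Yes-instance. -/
theorem yes_iff_exists_guess_on_fvs {V : Type} [Fintype V] [DecidableEq V]
    (G : SimpleGraph V) (U F : Finset V) (hF : IsFeedbackVertexSet G F) (k ℓ : ℕ) :
    IsYesInstance G U k ℓ ↔
      ∃ F' : Finset V, F' ⊆ F \ U ∧ F'.card ≤ k ∧
        IsYesInstance (deleteVertices G F') (U ∪ (F \ F')) (k - F'.card) ℓ :=
  yes_iff_exists_guess_on_fvs_general G U F k ℓ
end

section
/- Let T be a finite rooted tree, U ⊆ V(T), and 𝒫 a finite nonempty collection of paths in T such that some set contained in V(T) ∖ U intersects every path of 𝒫. Choose a path P ∈ 𝒫 with endpoints u and v such that no path in 𝒫 has the lowest common ancestor of its endpoints a proper descendant of lca(u,v). For w ∈ {u,v}, if the segment of P from lca(u,v) to w contains a vertex not in U, let w' denote the first such vertex encountered when moving from lca(u,v) toward w. Then at least one of u', v' is defined, and there exists a set X ⊆ V(T) ∖ U of minimum size among all sets contained in V(T) ∖ U that intersect every path of 𝒫, such that X contains u' or v'. -/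
/-- `a` is an ancestor of `v` in the tree `T` rooted at `r`: `a` lies on the (unique)
path of `T` from `r` to `v`. -/
def IsAncestor {V : Type} (T : SimpleGraph V) (r a v : V) : Prop :=
  ∀ p : T.Walk r v, p.IsPath → a ∈ p.support

/-- `w` is the lowest common ancestor of `u` and `v` in the tree `T` rooted at `r`:
`w` is a common ancestor of `u` and `v`, and every common ancestor of `u` and `v` is an
ancestor of `w`. -/
def IsLCA {V : Type} (T : SimpleGraph V) (r w u v : V) : Prop :=
  IsAncestor T r w u ∧ IsAncestor T r w v ∧
    ∀ a : V, IsAncestor T r a u → IsAncestor T r a v → IsAncestor T r a w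

/-- `x` is the first vertex not in `U` encountered on the (unique) path of `T` from `w`
towards `t`: `x` lies on the `w`–`t` path, `x ∉ U`, and every vertex on the `w`–`x`
path other than `x` belongs to `U`. -/
def IsFirstNonU {V : Type} (T : SimpleGraph V) (U : Finset V) (w t x : V) : Prop :=
  (∃ q : T.Walk w t, q.IsPath ∧ x ∈ q.support) ∧ x ∉ U ∧
    ∀ q : T.Walk w x, q.IsPath → ∀ y ∈ q.support, y ≠ x → y ∈ U

/-- A set of vertices `X` hits every path of the collection `Ps`. -/
def HitsAll {V : Type} {T : SimpleGraph V}
    (Ps : List (Σ a : V, Σ b : V, T.Walk a b)) (X : Finset V) : Prop :=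
  ∀ Q ∈ Ps, ∃ x ∈ X, x ∈ Q.2.2.support

set_option linter.unusedSectionVars false

namespace TreeAux
open SimpleGraph Walk

variable {V : Type} [DecidableEq V] {T : SimpleGraph V}

lemma path_eq (hT : T.IsTree) {a b : V} {p q : T.Walk a b} (hp : p.IsPath) (hq : q.IsPath) :
    p = q := ((hT.existsUnique_path a b).unique hp hq)

/-- canonical path -/
noncomputable def pth (hT : T.IsTree) (a b : V) : T.Walk a b :=
  (hT.existsUnique_path a b).choose

lemma pth_isPath (hT : T.IsTree) (a b : V) : (pth hT a b).IsPath :=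
  (hT.existsUnique_path a b).choose_spec.1

lemma eq_pth (hT : T.IsTree) {a b : V} {p : T.Walk a b} (hp : p.IsPath) : p = pth hT a b :=
  path_eq hT hp (pth_isPath hT a b)

lemma mem_take_drop_eq {a b u z : V} {p : T.Walk a b} (hp : p.IsPath) (hu : u ∈ p.support)
    (h1 : z ∈ (p.takeUntil u hu).support) (h2 : z ∈ (p.dropUntil u hu).support) : z = u := by
  by_contra hne
  have hspec := p.take_spec hu
  have hnodup : p.support.Nodup := hp.support_nodup
  rw [← hspec, Walk.support_append] at hnodup
  have hdisj := List.disjoint_of_nodup_append hnodup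
  have h2' : z ∈ (p.dropUntil u hu).support.tail := by
    have h3 := h2
    rw [(p.dropUntil u hu).support_eq_cons] at h3
    rcases List.mem_cons.mp h3 with h3 | h3
    · exact absurd h3 hne
    · exact h3
  exact hdisj h1 h2'

lemma takeUntil_first {v w : V} (p : T.Walk v w) (h : v ∈ p.support) :
    p.takeUntil v h = Walk.nil := by
  cases p with
  | nil => rfl
  | cons h' p => simp [Walk.takeUntil]

lemma takeUntil_cons {v x w u : V} (h : T.Adj v x) (p : T.Walk x w)
    (hu : u ∈ (Walk.cons h p).support) (hne : v ≠ u) (hu' : u ∈ p.support) :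
    (Walk.cons h p).takeUntil u hu = Walk.cons h (p.takeUntil u hu') := by
  simp [Walk.takeUntil, hne]

lemma mem_takeUntil_or {a b x y : V} (p : T.Walk a b) (hx : x ∈ p.support)
    (hy : y ∈ p.support) :
    x ∈ (p.takeUntil y hy).support ∨ y ∈ (p.takeUntil x hx).support := by
  induction p with
  | nil =>
    have hxy : x = y := by
      have h1 := hx; have h2 := hy
      simp only [Walk.support_nil, List.mem_singleton] at h1 h2
      rw [h1, h2]
    subst hxy
    left
    exact Walk.end_mem_support _
  | @cons a c b h p ih =>
    by_cases hxa : x = a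
    · subst hxa; left; exact Walk.start_mem_support _
    by_cases hya : y = a
    · subst hya; right; exact Walk.start_mem_support _
    have hx' : x ∈ p.support := by
      have h1 := hx
      rw [Walk.support_cons] at h1
      rcases List.mem_cons.mp h1 with h1 | h1
      · exact absurd h1 hxa
      · exact h1
    have hy' : y ∈ p.support := by
      have h1 := hy
      rw [Walk.support_cons] at h1
      rcases List.mem_cons.mp h1 with h1 | h1
      · exact absurd h1 hya
      · exact h1
    rcases ih hx' hy' with h' | h'
    · left
      rw [takeUntil_cons h p hy (fun he => hya he.symm) hy', Walk.support_cons]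
      exact List.mem_cons_of_mem _ h'
    · right
      rw [takeUntil_cons h p hx (fun he => hxa he.symm) hx', Walk.support_cons]
      exact List.mem_cons_of_mem _ h'


lemma exists_first {U : Finset V} {w t y : V} (q : T.Walk w t) (hy : y ∈ q.support)
    (hyU : y ∉ U) :
    ∃ x, ∃ hx : x ∈ q.support, x ∉ U ∧ x ∈ (q.takeUntil y hy).support ∧
      ∀ z ∈ (q.takeUntil x hx).support, z ≠ x → z ∈ U := by
  induction q with
  | nil =>
    rename_i s
    obtain rfl : y = s := by simpa using hy
    refine ⟨y, hy, hyU, Walk.end_mem_support _, ?_⟩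
    intro z hz hzne
    rw [takeUntil_first] at hz
    simp only [Walk.support_nil, List.mem_singleton] at hz
    exact absurd hz hzne
  | @cons w c t h p ih =>
    by_cases hwU : w ∈ U
    · have hyw : y ≠ w := fun he => hyU (he ▸ hwU)
      have hy' : y ∈ p.support := by
        have h1 := hy
        rw [Walk.support_cons] at h1
        rcases List.mem_cons.mp h1 with h1 | h1
        · exact absurd h1 hyw
        · exact h1
      obtain ⟨x, hx, hxU, hxy, hfirst⟩ := ih hy'
      have hwx : w ≠ x := fun he => hxU (he ▸ hwU)
      refine ⟨x, by rw [Walk.support_cons]; exact List.mem_cons_of_mem _ hx, hxU, ?_, ?_⟩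
      · rw [takeUntil_cons h p hy (fun he => hyw he.symm) hy', Walk.support_cons]
        exact List.mem_cons_of_mem _ hxy
      · intro z hz hzne
        rw [takeUntil_cons h p _ hwx hx, Walk.support_cons] at hz
        rcases List.mem_cons.mp hz with h1 | h1
        · exact h1 ▸ hwU
        · exact hfirst z h1 hzne
    · refine ⟨w, Walk.start_mem_support _, hwU, Walk.start_mem_support _, ?_⟩
      intro z hz hzne
      rw [takeUntil_first] at hz
      simp only [Walk.support_nil, List.mem_singleton] at hz
      exact absurd hz hzne

variable {r : V}

lemma anc_iff (hT : T.IsTree) {a v : V} :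
    IsAncestor T r a v ↔ a ∈ (pth hT r v).support :=
  ⟨fun h => h _ (pth_isPath hT r v),
   fun h p hp => by rw [path_eq hT hp (pth_isPath hT r v)]; exact h⟩

lemma takeUntil_pth (hT : T.IsTree) {s v a : V} (h : a ∈ (pth hT s v).support) :
    (pth hT s v).takeUntil a h = pth hT s a :=
  eq_pth hT ((pth_isPath hT s v).takeUntil h)

lemma dropUntil_pth (hT : T.IsTree) {s v a : V} (h : a ∈ (pth hT s v).support) :
    (pth hT s v).dropUntil a h = pth hT a v :=
  eq_pth hT ((pth_isPath hT s v).dropUntil h)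

lemma anc_refl (hT : T.IsTree) (a : V) : IsAncestor T r a a :=
  fun p _ => Walk.end_mem_support p

lemma root_anc (hT : T.IsTree) (v : V) : IsAncestor T r r v :=
  fun p _ => Walk.start_mem_support p

lemma anc_trans (hT : T.IsTree) {a b c : V} (hab : IsAncestor T r a b)
    (hbc : IsAncestor T r b c) : IsAncestor T r a c := by
  rw [anc_iff hT] at hab hbc ⊢
  have := takeUntil_pth hT hbc
  exact Walk.support_takeUntil_subset _ hbc (this ▸ hab)

lemma anc_antisymm (hT : T.IsTree) {a b : V} (hab : IsAncestor T r a b)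
    (hba : IsAncestor T r b a) : a = b := by
  rw [anc_iff hT] at hab hba
  have hba' : b ∈ ((pth hT r b).takeUntil a hab).support := by
    rw [takeUntil_pth hT hab]; exact hba
  exact (mem_take_drop_eq (pth_isPath hT r b) hab hba' (Walk.end_mem_support _)).symm

lemma anc_comparable (hT : T.IsTree) {a b y : V} (ha : IsAncestor T r a y)
    (hb : IsAncestor T r b y) : IsAncestor T r a b ∨ IsAncestor T r b a := by
  rw [anc_iff hT] at ha hb
  rcases mem_takeUntil_or (pth hT r y) ha hb with h | h
  · left; rw [anc_iff hT, ← takeUntil_pth hT hb]; exact h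
  · right; rw [anc_iff hT, ← takeUntil_pth hT ha]; exact h

/-- members of the canonical path from an ancestor `c` to `t`. -/
lemma seg_anc (hT : T.IsTree) {c t z : V} (hct : IsAncestor T r c t)
    (hz : z ∈ (pth hT c t).support) : IsAncestor T r c z ∧ IsAncestor T r z t := by
  have hc : c ∈ (pth hT r t).support := (anc_iff hT).mp hct
  have hdrop : (pth hT r t).dropUntil c hc = pth hT c t := dropUntil_pth hT hc
  have hz' : z ∈ (pth hT r t).support := by
    rw [← (pth hT r t).take_spec hc]
    rw [Walk.mem_support_append_iff]
    right; rw [hdrop]; exact hz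
  constructor
  · rcases mem_takeUntil_or (pth hT r t) hc hz' with h | h
    · rw [anc_iff hT, ← takeUntil_pth hT hz']; exact h
    · have hzc : z = c := by
        refine mem_take_drop_eq (pth_isPath hT r t) hc ?_ ?_
        · rw [takeUntil_pth hT hc] at h ⊢; exact h
        · rw [hdrop]; exact hz
      rw [hzc]; exact anc_refl hT c
  · rw [anc_iff hT]; exact hz'

lemma length_le_of_anc (hT : T.IsTree) {a b : V} (hab : IsAncestor T r a b) :
    (pth hT r a).length ≤ (pth hT r b).length ∧
      ((pth hT r a).length = (pth hT r b).length → a = b) := by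
  have ha : a ∈ (pth hT r b).support := (anc_iff hT).mp hab
  have hspec := (pth hT r b).take_spec ha
  have hlen : (pth hT r b).length =
      (pth hT r a).length + ((pth hT r b).dropUntil a ha).length := by
    conv_lhs => rw [← hspec]
    rw [Walk.length_append, takeUntil_pth hT ha]
  constructor
  · omega
  · intro he
    have h0 : ((pth hT r b).dropUntil a ha).length = 0 := by omega
    exact Walk.eq_of_length_eq_zero h0

lemma exists_lca (hT : T.IsTree) [Fintype V] (a b : V) : ∃ w, IsLCA T r w a b := by
  classical
  have hne : (Finset.univ.filter
      (fun z => IsAncestor T r z a ∧ IsAncestor T r z b)).Nonempty :=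
    ⟨r, by simp [root_anc hT]⟩
  obtain ⟨w, hwS, hmax⟩ := Finset.exists_max_image _ (fun z => (pth hT r z).length) hne
  simp only [Finset.mem_filter] at hwS
  refine ⟨w, hwS.2.1, hwS.2.2, fun z hza hzb => ?_⟩
  rcases anc_comparable hT hza hwS.2.1 with h | h
  · exact h
  · have h1 := length_le_of_anc hT h
    have h2 : (pth hT r z).length ≤ (pth hT r w).length :=
      hmax z (by simp [hza, hzb])
    have : w = z := h1.2 (le_antisymm h1.1 h2)
    rw [← this]; exact anc_refl hT w

lemma lca_mem_path (hT : T.IsTree) {w' a b : V} (hlca : IsLCA T r w' a b)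
    {q : T.Walk a b} (hq : q.IsPath) : w' ∈ q.support := by
  have h1 : w' ∈ (pth hT r a).support := (anc_iff hT).mp hlca.1
  have h2 : w' ∈ (pth hT r b).support := (anc_iff hT).mp hlca.2.1
  set dA := (pth hT r a).dropUntil w' h1 with hdA
  set dB := (pth hT r b).dropUntil w' h2 with hdB
  have hdApath : dA.IsPath := (pth_isPath hT r a).dropUntil h1
  have hdBpath : dB.IsPath := (pth_isPath hT r b).dropUntil h2
  have hdisj : ∀ z, z ∈ dA.support → z ∈ dB.support → z = w' := by
    intro z hzA hzB
    have hza : IsAncestor T r z a := by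
      rw [anc_iff hT]
      rw [← (pth hT r a).take_spec h1, Walk.mem_support_append_iff]
      right; exact hzA
    have hzb : IsAncestor T r z b := by
      rw [anc_iff hT]
      rw [← (pth hT r b).take_spec h2, Walk.mem_support_append_iff]
      right; exact hzB
    have hzw : IsAncestor T r z w' := hlca.2.2 z hza hzb
    refine mem_take_drop_eq (pth_isPath hT r a) h1 ?_ hzA
    rw [takeUntil_pth hT h1]
    exact (anc_iff hT).mp hzw
  have hW : (dA.reverse.append dB).IsPath := by
    rw [Walk.isPath_def, Walk.support_append, Walk.support_reverse]
    refine List.Nodup.append ?_ ?_ ?_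
    · exact List.nodup_reverse.mpr hdApath.support_nodup
    · exact (List.tail_sublist _).nodup hdBpath.support_nodup
    · intro z hz1 hz2
      have hzA : z ∈ dA.support := List.mem_reverse.mp hz1
      have hzB : z ∈ dB.support := by
        rw [dB.support_eq_cons]; exact List.mem_cons_of_mem _ hz2
      have hzw := hdisj z hzA hzB
      subst hzw
      have : dB.support.Nodup := hdBpath.support_nodup
      rw [dB.support_eq_cons] at this
      exact (List.nodup_cons.mp this).1 hz2
  have heq : q = dA.reverse.append dB := path_eq hT hq hW
  rw [heq, Walk.mem_support_append_iff]
  right; exact Walk.start_mem_support _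

end TreeAux


/-- Let `T` be a finite rooted tree, `U` a set of (undeletable) vertices, and `Ps` a
finite nonempty collection of paths of `T` that can be hit by a set avoiding `U`.
Choose `P ∈ Ps`, with endpoints `u, v` and `w = lca(u,v)`, such that no path of `Ps` has
the lca of its endpoints a proper descendant of `w`.  Then there is a vertex `x` which
is the first vertex outside `U` on the segment of `P` from `w` towards `u` or towards
`v` (in particular at least one of these is defined), together with a minimum-size set
`X ⊆ V ∖ U` hitting all paths of `Ps` with `x ∈ X`. -/
theorem exists_min_hitting_set_through_first_deletable {V : Type} [Fintype V]
    [DecidableEq V] (T : SimpleGraph V) (hT : T.IsTree) (r : V) (U : Finset V)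
    (Ps : List (Σ a : V, Σ b : V, T.Walk a b)) (hne : Ps ≠ [])
    (hpaths : ∀ Q ∈ Ps, Q.2.2.IsPath)
    (hhit : ∃ X₀ : Finset V, (∀ x ∈ X₀, x ∉ U) ∧ HitsAll Ps X₀)
    (P : Σ a : V, Σ b : V, T.Walk a b) (hP : P ∈ Ps)
    (w : V) (hw : IsLCA T r w P.1 P.2.1)
    (hlow : ∀ Q ∈ Ps, ∀ w' : V, IsLCA T r w' Q.1 Q.2.1 →
      ¬ (IsAncestor T r w w' ∧ w' ≠ w)) :
    ∃ x : V, (IsFirstNonU T U w P.1 x ∨ IsFirstNonU T U w P.2.1 x) ∧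
      ∃ X : Finset V, (∀ y ∈ X, y ∉ U) ∧ HitsAll Ps X ∧
        (∀ Y : Finset V, (∀ y ∈ Y, y ∉ U) → HitsAll Ps Y → X.card ≤ Y.card) ∧
        x ∈ X := by
  classical
  open SimpleGraph Walk TreeAux in
  obtain ⟨X₀, hX₀U, hX₀hit⟩ := hhit
  have hSne : (Finset.univ.filter
      (fun X : Finset V => (∀ y ∈ X, y ∉ U) ∧ HitsAll Ps X)).Nonempty :=
    ⟨X₀, by simp only [Finset.mem_filter, Finset.mem_univ, true_and]; exact ⟨hX₀U, hX₀hit⟩⟩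
  obtain ⟨X, hXS, hXmin⟩ := Finset.exists_min_image _ Finset.card hSne
  simp only [Finset.mem_filter, Finset.mem_univ, true_and] at hXS
  obtain ⟨hXU, hXhit⟩ := hXS
  have hXmin' : ∀ Y : Finset V, (∀ y ∈ Y, y ∉ U) → HitsAll Ps Y → X.card ≤ Y.card :=
    fun Y h1 h2 => hXmin Y (by simp only [Finset.mem_filter, Finset.mem_univ, true_and]; exact ⟨h1, h2⟩)
  obtain ⟨y, hyX, hyp⟩ := hXhit P hP
  have hyU : y ∉ U := hXU y hyX
  have hppath : P.2.2.IsPath := hpaths P hP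
  have hwmem : w ∈ P.2.2.support := lca_mem_path hT hw hppath
  have hwy' := hyp
  rw [← P.2.2.take_spec hwmem, Walk.mem_support_append_iff] at hwy'
  have main : ∀ t : V, IsAncestor T r w t → y ∈ (pth hT w t).support →
      ∃ x, IsFirstNonU T U w t x ∧
        ∃ X' : Finset V, (∀ y' ∈ X', y' ∉ U) ∧ HitsAll Ps X' ∧
          (∀ Y : Finset V, (∀ y' ∈ Y, y' ∉ U) → HitsAll Ps Y → X'.card ≤ Y.card) ∧
          x ∈ X' := by
    intro t hwt hyseg
    obtain ⟨x, hx, hxU, hxy, hfirst⟩ := exists_first (pth hT w t) hyseg hyU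
    have hwy : IsAncestor T r w y := (seg_anc hT hwt hyseg).1
    have hxy' : x ∈ (pth hT w y).support := by
      rw [← takeUntil_pth hT hyseg]
      exact hxy
    have hwx : IsAncestor T r w x := (seg_anc hT hwy hxy').1
    have hxancy : IsAncestor T r x y := (seg_anc hT hwy hxy').2
    have hfirstNonU : IsFirstNonU T U w t x := by
      refine ⟨⟨pth hT w t, pth_isPath hT w t, hx⟩, hxU, ?_⟩
      intro q hq z hz hzx
      have heq : q = (pth hT w t).takeUntil x hx :=
        path_eq hT hq ((pth_isPath hT w t).takeUntil hx)
      rw [heq] at hz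
      exact hfirst z hz hzx
    have htrans : ∀ Q ∈ Ps, y ∈ Q.2.2.support → x ∈ Q.2.2.support := by
      intro Q hQ hyQ
      obtain ⟨wQ, hwQ⟩ := exists_lca (r := r) hT Q.1 Q.2.1
      have hQpath := hpaths Q hQ
      have hwQmem : wQ ∈ Q.2.2.support := lca_mem_path hT hwQ hQpath
      have hyQ' := hyQ
      rw [← Q.2.2.take_spec hwQmem, Walk.mem_support_append_iff] at hyQ'
      have hrevA : (Q.2.2.takeUntil wQ hwQmem).reverse = pth hT wQ Q.1 :=
        eq_pth hT ((hQpath.takeUntil hwQmem).reverse)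
      have hdropB : Q.2.2.dropUntil wQ hwQmem = pth hT wQ Q.2.1 :=
        eq_pth hT (hQpath.dropUntil hwQmem)
      have hyseg' : y ∈ (pth hT wQ Q.1).support ∨ y ∈ (pth hT wQ Q.2.1).support := by
        rcases hyQ' with h | h
        · left
          rw [← hrevA, Walk.support_reverse, List.mem_reverse]; exact h
        · right
          rw [← hdropB]; exact h
      have hwQy : IsAncestor T r wQ y := by
        rcases hyseg' with h | h
        · exact (seg_anc hT hwQ.1 h).1
        · exact (seg_anc hT hwQ.2.1 h).1
      have hwQw : IsAncestor T r wQ w := by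
        rcases anc_comparable hT hwQy hwy with h | h
        · exact h
        · by_cases he : wQ = w
          · rw [he]; exact anc_refl hT w
          · exact absurd ⟨h, he⟩ (hlow Q hQ wQ hwQ)
      have hwQx : IsAncestor T r wQ x := anc_trans hT hwQw hwx
      have hxseg : x ∈ (pth hT wQ y).support := by
        have hwQρ : wQ ∈ (pth hT r y).support := (anc_iff hT).mp hwQy
        have hxρ' : x ∈ (pth hT r y).support := (anc_iff hT).mp hxancy
        rw [← (pth hT r y).take_spec hwQρ, Walk.mem_support_append_iff] at hxρ'
        rcases hxρ' with h | h
        · have hxancwQ : IsAncestor T r x wQ := by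
            rw [anc_iff hT, ← takeUntil_pth hT hwQρ]; exact h
          have hxwQ : x = wQ := anc_antisymm hT hxancwQ hwQx
          rw [hxwQ]
          exact Walk.start_mem_support _
        · rw [← dropUntil_pth hT hwQρ]; exact h
      rcases hyseg' with hc | hc
      · have hsub : (pth hT wQ y).support ⊆ (pth hT wQ Q.1).support := by
          rw [← takeUntil_pth hT hc]
          exact Walk.support_takeUntil_subset _ hc
        have hxc : x ∈ (pth hT wQ Q.1).support := hsub hxseg
        rw [← hrevA, Walk.support_reverse, List.mem_reverse] at hxc
        exact Walk.support_takeUntil_subset _ hwQmem hxc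
      · have hsub : (pth hT wQ y).support ⊆ (pth hT wQ Q.2.1).support := by
          rw [← takeUntil_pth hT hc]
          exact Walk.support_takeUntil_subset _ hc
        have hxc : x ∈ (pth hT wQ Q.2.1).support := hsub hxseg
        rw [← hdropB] at hxc
        exact Walk.support_dropUntil_subset _ hwQmem hxc
    refine ⟨x, hfirstNonU, insert x (X.erase y), ?_, ?_, ?_, Finset.mem_insert_self x _⟩
    · intro z hz
      rcases Finset.mem_insert.mp hz with rfl | hz
      · exact hxU
      · exact hXU z (Finset.mem_of_mem_erase hz)
    · intro Q hQ
      obtain ⟨z, hzX, hzQ⟩ := hXhit Q hQ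
      by_cases hzy : z = y
      · subst hzy
        exact ⟨x, Finset.mem_insert_self x _, htrans Q hQ hzQ⟩
      · exact ⟨z, Finset.mem_insert_of_mem (Finset.mem_erase.mpr ⟨hzy, hzX⟩), hzQ⟩
    · intro Y hYU hYhit
      have hcard1 : 1 ≤ X.card := Finset.card_pos.mpr ⟨y, hyX⟩
      calc (insert x (X.erase y)).card ≤ (X.erase y).card + 1 := Finset.card_insert_le _ _
        _ = X.card := by rw [Finset.card_erase_of_mem hyX]; omega
        _ ≤ Y.card := hXmin' Y hYU hYhit
  rcases hwy' with h | h
  · have hrev : (P.2.2.takeUntil w hwmem).reverse = pth hT w P.1 :=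
      eq_pth hT ((hppath.takeUntil hwmem).reverse)
    have hyseg : y ∈ (pth hT w P.1).support := by
      rw [← hrev, Walk.support_reverse, List.mem_reverse]; exact h
    obtain ⟨x, h1, h2⟩ := main P.1 hw.1 hyseg
    exact ⟨x, Or.inl h1, h2⟩
  · have hdrop : P.2.2.dropUntil w hwmem = pth hT w P.2.1 :=
      eq_pth hT (hppath.dropUntil hwmem)
    have hyseg : y ∈ (pth hT w P.2.1).support := by
      rw [← hdrop]; exact h
    obtain ⟨x, h1, h2⟩ := main P.2.1 hw.2.1 hyseg
    exact ⟨x, Or.inr h1, h2⟩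
end

section
/- For every integer r ≥ 2 there exists a finite simple graph TriCyc_r with 2r distinguished vertices v₁,…,v_r and v̄₁,…,v̄_r such that: (1) TriCyc_r has no triangle packing of size greater than r, and it has exactly two triangle packings of size r, denoted P and P̄; (2) P covers all of v₁,…,v_r and none of v̄₁,…,v̄_r; (3) P̄ covers all of v̄₁,…,v̄_r and none of v₁,…,v_r. -/
namespace TriCycAux

variable {r : ℕ}

/-- generic successor characterization in `Fin n` -/
lemma succ_iff {n : ℕ} [NeZero n] (hn : 2 ≤ n) (j k : Fin n) :
    k = j + 1 ↔ (k.val = j.val + 1 ∨ (j.val = n - 1 ∧ k.val = 0)) := by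
  have hone : (1 : Fin n).val = 1 := by
    rw [Fin.val_one']; exact Nat.mod_eq_of_lt hn
  have hadd : (j + 1).val = (j.val + 1) % n := by
    rw [Fin.add_def, hone]
  have hj := j.isLt
  constructor
  · rintro rfl
    rw [hadd]
    rcases Nat.lt_or_ge (j.val + 1) n with h | h
    · left; exact Nat.mod_eq_of_lt h
    · right
      have : j.val + 1 = n := by omega
      rw [this, Nat.mod_self]
      omega
  · intro h
    apply Fin.ext
    rw [hadd]
    rcases h with h | ⟨h1, h2⟩
    · rw [Nat.mod_eq_of_lt (by omega)]; omega
    · have : j.val + 1 = n := by omega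
      rw [this, Nat.mod_self]; omega

section Defs

def C (i : Fin (2*r)) : Fin (4*r) := ⟨i.val, by have := i.isLt; omega⟩
def A (i : Fin (2*r)) : Fin (4*r) := ⟨2*r + i.val, by have := i.isLt; omega⟩

lemma C_inj {i j : Fin (2*r)} (h : C i = C j) : i = j := by
  apply Fin.ext; simpa [C, Fin.ext_iff] using h

lemma A_inj {i j : Fin (2*r)} (h : A i = A j) : i = j := by
  apply Fin.ext
  have := (Fin.ext_iff).mp h
  simp only [A] at this
  omega

lemma A_ne_C (i j : Fin (2*r)) : A i ≠ C j := by
  intro h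
  have hj := j.isLt
  have := (Fin.ext_iff).mp h
  simp only [A, C] at this
  omega

lemma vert_form (x : Fin (4*r)) : (∃ i, x = C i) ∨ (∃ i, x = A i) := by
  have hx := x.isLt
  rcases Nat.lt_or_ge x.val (2*r) with h | h
  · exact Or.inl ⟨⟨x.val, h⟩, by apply Fin.ext; simp [C]⟩
  · exact Or.inr ⟨⟨x.val - 2*r, by omega⟩, by apply Fin.ext; simp [A]; omega⟩

variable [NeZero r]

instance : NeZero (2*r) := ⟨by have := NeZero.ne r; omega⟩

lemma two_r_ge : 2 ≤ 2*r := by have := Nat.pos_of_ne_zero (NeZero.ne r); omega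

lemma ne_succ_self (j : Fin (2*r)) : j ≠ j + 1 := by
  intro h
  rcases (succ_iff two_r_ge j j).mp h with h | ⟨h1, h2⟩
  · omega
  · have := two_r_ge (r := r); omega

def R (x y : Fin (4*r)) : Prop :=
  ∃ j : Fin (2*r), (x = C j ∧ y = C (j+1)) ∨ (x = A j ∧ (y = C j ∨ y = C (j+1)))

def G : SimpleGraph (Fin (4*r)) := SimpleGraph.fromRel R

def T (j : Fin (2*r)) : Finset (Fin (4*r)) := {C j, C (j+1), A j}

lemma mem_T {x : Fin (4*r)} {j : Fin (2*r)} :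
    x ∈ T j ↔ x = C j ∨ x = C (j+1) ∨ x = A j := by
  simp [T]

lemma A_mem_T_iff {i j : Fin (2*r)} : A i ∈ T j ↔ i = j := by
  rw [mem_T]
  constructor
  · rintro (h | h | h)
    · exact absurd h (A_ne_C _ _)
    · exact absurd h (A_ne_C _ _)
    · exact A_inj h
  · rintro rfl; right; right; rfl

lemma T_inj {i j : Fin (2*r)} (h : T i = T j) : i = j := by
  have : A i ∈ T j := h ▸ (A_mem_T_iff.mpr rfl)
  exact A_mem_T_iff.mp this

lemma T_card (j : Fin (2*r)) : (T j).card = 3 := by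
  apply Finset.card_eq_three.mpr
  exact ⟨C j, C (j+1), A j, fun h => ne_succ_self j (C_inj h),
    fun h => A_ne_C _ _ h.symm, fun h => A_ne_C _ _ h.symm, rfl⟩

lemma adj1 (j : Fin (2*r)) : (G (r := r)).Adj (C j) (C (j+1)) := by
  rw [G, SimpleGraph.fromRel_adj]
  exact ⟨fun h => ne_succ_self j (C_inj h), Or.inl ⟨j, Or.inl ⟨rfl, rfl⟩⟩⟩

lemma adj2 (j : Fin (2*r)) : (G (r := r)).Adj (A j) (C j) := by
  rw [G, SimpleGraph.fromRel_adj]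
  exact ⟨(A_ne_C _ _), Or.inl ⟨j, Or.inr ⟨rfl, Or.inl rfl⟩⟩⟩

lemma adj3 (j : Fin (2*r)) : (G (r := r)).Adj (A j) (C (j+1)) := by
  rw [G, SimpleGraph.fromRel_adj]
  exact ⟨(A_ne_C _ _), Or.inl ⟨j, Or.inr ⟨rfl, Or.inr rfl⟩⟩⟩

lemma adj_T {j : Fin (2*r)} : ∀ x ∈ T j, ∀ y ∈ T j, x ≠ y → (G (r := r)).Adj x y := by
  intro x hx y hy hxy
  rw [mem_T] at hx hy
  rcases hx with rfl | rfl | rfl <;> rcases hy with rfl | rfl | rfl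
  · exact absurd rfl hxy
  · exact adj1 j
  · exact (adj2 j).symm
  · exact (adj1 j).symm
  · exact absurd rfl hxy
  · exact (adj3 j).symm
  · exact adj2 j
  · exact adj3 j
  · exact absurd rfl hxy

lemma adj_A {j : Fin (2*r)} {x : Fin (4*r)} (h : (G (r := r)).Adj (A j) x) :
    x = C j ∨ x = C (j+1) := by
  rw [G, SimpleGraph.fromRel_adj] at h
  rcases h with ⟨hne, ⟨j', (⟨h1, h2⟩ | ⟨h1, h2⟩)⟩ | ⟨j', (⟨h1, h2⟩ | ⟨h1, h2⟩)⟩⟩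
  · exact absurd h1 (A_ne_C _ _)
  · rcases A_inj h1 with rfl; exact h2
  · exact absurd h2 (A_ne_C _ _)
  · rcases h2 with h2 | h2 <;> exact absurd h2 (A_ne_C _ _)

lemma adj_C_C {i k : Fin (2*r)} (h : (G (r := r)).Adj (C i) (C k)) :
    k = i + 1 ∨ i = k + 1 := by
  rw [G, SimpleGraph.fromRel_adj] at h
  rcases h with ⟨hne, ⟨j', (⟨h1, h2⟩ | ⟨h1, h2⟩)⟩ | ⟨j', (⟨h1, h2⟩ | ⟨h1, h2⟩)⟩⟩
  · rcases C_inj h1 with rfl; exact Or.inl (C_inj h2)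
  · exact absurd h1.symm (A_ne_C _ _)
  · rcases C_inj h1 with rfl; exact Or.inr (C_inj h2)
  · exact absurd h1.symm (A_ne_C _ _)

end Defs

end TriCycAux

namespace TriCycAux

set_option linter.unusedSectionVars false

variable {r : ℕ} [NeZero r]

lemma disjoint_T {j k : Fin (2*r)} (hjk : j ≠ k) (h1 : k ≠ j + 1) (h2 : j ≠ k + 1) :
    Disjoint (T j) (T (r := r) k) := by
  rw [Finset.disjoint_left]
  intro x hx hx'
  rw [mem_T] at hx hx'
  rcases hx with rfl | rfl | rfl <;> rcases hx' with h | h | h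
  · exact hjk (C_inj h)
  · exact h2 (C_inj h)
  · exact A_ne_C _ _ h.symm
  · exact h1 (C_inj h).symm
  · exact hjk (by have := C_inj h; exact add_right_cancel this)
  · exact A_ne_C _ _ h.symm
  · exact A_ne_C _ _ h
  · exact A_ne_C _ _ h
  · exact hjk (A_inj h)

lemma triangle_core {j : Fin (2*r)} {x y z : Fin (4*r)}
    (hx : x = A j) (axy : (G (r := r)).Adj x y) (axz : (G (r := r)).Adj x z)
    (hyz : y ≠ z) : ({x, y, z} : Finset (Fin (4*r))) = T j := by
  subst hx
  have hy := adj_A axy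
  have hz := adj_A axz
  ext a
  rw [mem_T]
  simp only [Finset.mem_insert, Finset.mem_singleton]
  rcases hy with rfl | rfl <;> rcases hz with rfl | rfl <;> first | (exact absurd rfl hyz) | tauto

lemma triangle_eq (hr : 2 ≤ r) {t : Finset (Fin (4*r))} (h3 : t.card = 3)
    (hadj : ∀ x ∈ t, ∀ y ∈ t, x ≠ y → (G (r := r)).Adj x y) : ∃ j, t = T j := by
  rcases Finset.card_eq_three.mp h3 with ⟨x, y, z, hxy, hxz, hyz, rfl⟩
  have hxm : x ∈ ({x, y, z} : Finset (Fin (4*r))) := by simp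
  have hym : y ∈ ({x, y, z} : Finset (Fin (4*r))) := by simp
  have hzm : z ∈ ({x, y, z} : Finset (Fin (4*r))) := by simp
  have axy := hadj x hxm y hym hxy
  have axz := hadj x hxm z hzm hxz
  have ayz := hadj y hym z hzm hyz
  rcases vert_form x with ⟨i, hx⟩ | ⟨j, hx⟩
  · rcases vert_form y with ⟨k, hy⟩ | ⟨j, hy⟩
    · rcases vert_form z with ⟨l, hz⟩ | ⟨j, hz⟩
      · -- all three are cycle vertices: impossible
        exfalso
        subst hx; subst hy; subst hz
        have e1 := adj_C_C axy
        have e2 := adj_C_C axz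
        have e3 := adj_C_C ayz
        have hik : i ≠ k := fun h => hxy (by rw [h])
        have hil : i ≠ l := fun h => hxz (by rw [h])
        have hkl : k ≠ l := fun h => hyz (by rw [h])
        have t2 := two_r_ge (r := r)
        rw [succ_iff t2, succ_iff t2] at e1 e2 e3
        rw [Fin.ne_iff_vne] at hik hil hkl
        have hi := i.isLt; have hk := k.isLt; have hl := l.isLt
        rcases e1 with (e1 | e1) | (e1 | e1) <;>
          rcases e2 with (e2 | e2) | (e2 | e2) <;>
          rcases e3 with (e3 | e3) | (e3 | e3) <;> omega
      · -- z is an apex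
        have h : ({z, x, y} : Finset (Fin (4*r))) = T j :=
          triangle_core hz axz.symm ayz.symm hxy
        refine ⟨j, ?_⟩
        rw [← h]; ext a
        simp only [Finset.mem_insert, Finset.mem_singleton]; tauto
    · -- y is an apex
      have h : ({y, x, z} : Finset (Fin (4*r))) = T j :=
        triangle_core hy axy.symm ayz hxz
      refine ⟨j, ?_⟩
      rw [← h]; ext a
      simp only [Finset.mem_insert, Finset.mem_singleton]; tauto
  · exact ⟨j, triangle_core hx axy axz hyz⟩

/-! ### even/odd index triangles -/

def Ep (i : Fin r) : Fin (2*r) := ⟨2*i.val, by have := i.isLt; omega⟩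
def Op (i : Fin r) : Fin (2*r) := ⟨2*i.val+1, by have := i.isLt; omega⟩

lemma Ep_succ (i : Fin r) : Ep i + 1 = Op (r := r) i := by
  have := i.isLt
  exact ((succ_iff two_r_ge (Ep i) (Op i)).mpr (Or.inl rfl)).symm

lemma Ep_inj {i k : Fin r} (h : Ep i = Ep (r := r) k) : i = k := by
  rw [Fin.ext_iff] at h ⊢; simp only [Ep] at h; omega

lemma Op_inj {i k : Fin r} (h : Op i = Op (r := r) k) : i = k := by
  rw [Fin.ext_iff] at h ⊢; simp only [Op] at h; omega

lemma Ep_ne_Op (i k : Fin r) : Ep i ≠ Op (r := r) k := by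
  rw [Fin.ne_iff_vne]; simp only [Ep, Op]; omega

def evens : Finset (Fin (2*r)) := Finset.univ.image (Ep (r := r))
def odds : Finset (Fin (2*r)) := Finset.univ.image (Op (r := r))

lemma evens_card : (evens (r := r)).card = r := by
  rw [evens, Finset.card_image_of_injective _ (fun a b h => Ep_inj h), Finset.card_univ,
    Fintype.card_fin]

lemma odds_card : (odds (r := r)).card = r := by
  rw [odds, Finset.card_image_of_injective _ (fun a b h => Op_inj h), Finset.card_univ,
    Fintype.card_fin]

/-! ### independent sets in the cycle of length 2r -/

lemma indep_card_le {S : Finset (Fin (2*r))} (hS : ∀ j ∈ S, j + 1 ∉ S) :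
    S.card ≤ r := by
  have : S.card ≤ (Finset.univ : Finset (Fin r)).card := by
    apply Finset.card_le_card_of_injOn (fun j => (⟨j.val / 2, by have := j.isLt; omega⟩ : Fin r))
      (fun _ _ => Finset.mem_univ _)
    intro j hj k hk h
    by_contra hne
    rw [Fin.mk.injEq] at h
    have hj2 := j.isLt; have hk2 := k.isLt
    have hne' : j.val ≠ k.val := fun hh => hne (Fin.ext hh)
    rcases Nat.lt_or_ge j.val k.val with hlt | hge
    · have hk1 : k.val = j.val + 1 := by omega
      exact hS j hj (((succ_iff two_r_ge j k).mpr (Or.inl hk1)) ▸ hk)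
    · have hj1 : j.val = k.val + 1 := by omega
      exact hS k hk (((succ_iff two_r_ge k j).mpr (Or.inl hj1)) ▸ hj)
  simpa using this

end TriCycAux

namespace TriCycAux

variable {r : ℕ} [NeZero r]

lemma Op_succ (hr : 2 ≤ r) (i : Fin r) : Op i + 1 = Ep (r := r) (i + 1) := by
  symm
  apply (succ_iff two_r_ge (Op i) (Ep (i+1))).mpr
  have h := (succ_iff hr i (i + 1)).mp rfl
  have hi := i.isLt
  rcases h with h | ⟨h1, h2⟩
  · left; simp only [Ep, Op, h]; omega
  · right
    constructor
    · simp only [Op]; omega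
    · simp only [Ep, h2]

lemma indep_eq (hr : 2 ≤ r) {S : Finset (Fin (2*r))} (hS : ∀ j ∈ S, j + 1 ∉ S)
    (hc : S.card = r) : S = evens ∨ S = odds := by
  -- surjectivity onto pairs
  have himg : S.image (fun j : Fin (2*r) => (⟨j.val / 2, by have := j.isLt; omega⟩ : Fin r))
      = Finset.univ := by
    apply Finset.eq_univ_of_card
    rw [Finset.card_image_of_injOn, hc, Fintype.card_fin]
    intro j hj k hk h
    by_contra hne
    rw [Fin.mk.injEq] at h
    have hj2 := j.isLt; have hk2 := k.isLt
    have hne' : j.val ≠ k.val := fun hh => hne (Fin.ext hh)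
    rcases Nat.lt_or_ge j.val k.val with hlt | hge
    · exact hS j hj (((succ_iff two_r_ge j k).mpr (Or.inl (by omega))) ▸ hk)
    · exact hS k hk (((succ_iff two_r_ge k j).mpr (Or.inl (by omega))) ▸ hj)
  have claim1 : ∀ i : Fin r, Ep i ∈ S ∨ Op (r := r) i ∈ S := by
    intro i
    have : i ∈ S.image (fun j : Fin (2*r) => (⟨j.val / 2, by have := j.isLt; omega⟩ : Fin r)) :=
      himg ▸ Finset.mem_univ i
    rcases Finset.mem_image.mp this with ⟨j, hj, hji⟩
    rw [Fin.mk.injEq] at hji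
    have hj2 := j.isLt
    rcases Nat.even_or_odd j.val with ⟨m, hm⟩ | ⟨m, hm⟩
    · left
      have : j = Ep i := by rw [Fin.ext_iff]; simp only [Ep]; omega
      exact this ▸ hj
    · right
      have : j = Op i := by rw [Fin.ext_iff]; simp only [Op]; omega
      exact this ▸ hj
  have claim2 : ∀ i : Fin r, Ep (r := r) i ∈ S → Op (r := r) i ∉ S := by
    intro i hi
    rw [← Ep_succ]
    exact hS _ hi
  have claim3 : ∀ i : Fin r, Op (r := r) i ∈ S → Op (r := r) (i + 1) ∈ S := by
    intro i hi
    rcases claim1 (i + 1) with h | h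
    · exact absurd (Op_succ hr i ▸ hS _ hi) (not_not_intro h)
    · exact h
  by_cases h0 : Op (r := r) (⟨0, by omega⟩ : Fin r) ∈ S
  · right
    have key : ∀ k, ∀ hk : k < r, Op (⟨k, hk⟩ : Fin r) ∈ S := by
      intro k
      induction k with
      | zero => intro hk; exact h0
      | succ m ih =>
        intro hk
        have h1 : (⟨m, by omega⟩ : Fin r) + 1 = ⟨m + 1, hk⟩ :=
          ((succ_iff hr _ _).mpr (Or.inl rfl)).symm
        have := claim3 ⟨m, by omega⟩ (ih (by omega))
        rwa [h1] at this
    have hsub : odds ⊆ S := by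
      intro x hx
      rcases Finset.mem_image.mp hx with ⟨i, _, rfl⟩
      have := key i.val i.isLt
      simpa using this
    exact (Finset.eq_of_subset_of_card_le hsub (by rw [hc, odds_card])).symm
  · left
    have hE0 : Ep (r := r) (⟨0, by omega⟩ : Fin r) ∈ S := (claim1 _).resolve_right h0
    have key : ∀ k, ∀ hk : k < r, Ep (⟨r - 1 - k, by omega⟩ : Fin r) ∈ S := by
      intro k
      induction k with
      | zero =>
        intro hk
        rcases claim1 ⟨r - 1 - 0, by omega⟩ with h | h
        · exact h
        · exfalso
          have hwrap : (⟨r - 1 - 0, by omega⟩ : Fin r) + 1 = ⟨0, by omega⟩ :=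
            ((succ_iff hr _ _).mpr (Or.inr ⟨by simp, rfl⟩)).symm
          have := claim3 _ h
          rw [hwrap] at this
          exact h0 this
      | succ m ih =>
        intro hk
        have ihm := ih (by omega)
        rcases claim1 ⟨r - 1 - (m + 1), by omega⟩ with h | h
        · exact h
        · exfalso
          have hstep : (⟨r - 1 - (m + 1), by omega⟩ : Fin r) + 1 = ⟨r - 1 - m, by omega⟩ :=
            ((succ_iff hr _ _).mpr (Or.inl (by simp; omega))).symm
          have := claim3 _ h
          rw [hstep] at this
          exact claim2 _ ihm this
    have hsub : evens ⊆ S := by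
      intro x hx
      rcases Finset.mem_image.mp hx with ⟨i, _, rfl⟩
      have hi := i.isLt
      have := key (r - 1 - i.val) (by omega)
      have heq : (⟨r - 1 - (r - 1 - i.val), by omega⟩ : Fin r) = i := by
        rw [Fin.ext_iff]; simp; omega
      rwa [heq] at this
    exact (Finset.eq_of_subset_of_card_le hsub (by rw [hc, evens_card])).symm

end TriCycAux

namespace TriCycAux

variable {r : ℕ} [NeZero r]

lemma packing_of_indep {S : Finset (Fin (2*r))} (hS : ∀ j ∈ S, j + 1 ∉ S) :
    (∀ t ∈ S.image T, t.card = 3 ∧ ∀ x ∈ t, ∀ y ∈ t, x ≠ y → (G (r := r)).Adj x y) ∧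
      ∀ t ∈ S.image T, ∀ s ∈ S.image T, t ≠ s → Disjoint t s := by
  constructor
  · intro t ht
    rcases Finset.mem_image.mp ht with ⟨j, _, rfl⟩
    exact ⟨T_card j, adj_T⟩
  · intro t ht s hs hts
    rcases Finset.mem_image.mp ht with ⟨j, hj, rfl⟩
    rcases Finset.mem_image.mp hs with ⟨k, hk, rfl⟩
    have hjk : j ≠ k := fun h => hts (by rw [h])
    apply disjoint_T hjk
    · intro h; exact hS j hj (h ▸ hk)
    · intro h; exact hS k hk (h ▸ hj)

lemma evens_indep : ∀ j ∈ evens (r := r), j + 1 ∉ evens := by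
  intro j hj hj1
  rcases Finset.mem_image.mp hj with ⟨i, _, rfl⟩
  rcases Finset.mem_image.mp hj1 with ⟨k, _, hk⟩
  rw [Ep_succ] at hk
  exact Ep_ne_Op k i hk

lemma odds_indep (hr : 2 ≤ r) : ∀ j ∈ odds (r := r), j + 1 ∉ odds := by
  intro j hj hj1
  rcases Finset.mem_image.mp hj with ⟨i, _, rfl⟩
  rcases Finset.mem_image.mp hj1 with ⟨k, _, hk⟩
  rw [Op_succ hr] at hk
  exact Ep_ne_Op (i+1) k hk.symm

lemma packing_structure (hr : 2 ≤ r) {Q : Finset (Finset (Fin (4*r)))}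
    (hQ1 : ∀ t ∈ Q, t.card = 3 ∧ ∀ x ∈ t, ∀ y ∈ t, x ≠ y → (G (r := r)).Adj x y)
    (hQ2 : ∀ t ∈ Q, ∀ s ∈ Q, t ≠ s → Disjoint t s) :
    ∃ S : Finset (Fin (2*r)), (∀ j ∈ S, j + 1 ∉ S) ∧ Q = S.image T ∧ S.card = Q.card := by
  set S := Finset.univ.filter (fun j => T j ∈ Q) with hSdef
  have hind : ∀ j ∈ S, j + 1 ∉ S := by
    intro j hj hj1
    rw [hSdef, Finset.mem_filter] at hj hj1
    have hne : T j ≠ T (j + 1) := fun h => ne_succ_self j (T_inj h)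
    have hdisj := hQ2 _ hj.2 _ hj1.2 hne
    rw [Finset.disjoint_left] at hdisj
    exact hdisj (mem_T.mpr (Or.inr (Or.inl rfl))) (mem_T.mpr (Or.inl rfl))
  have heq : Q = S.image T := by
    ext t
    rw [Finset.mem_image]
    constructor
    · intro ht
      rcases triangle_eq hr (hQ1 t ht).1 (hQ1 t ht).2 with ⟨j, rfl⟩
      exact ⟨j, Finset.mem_filter.mpr ⟨Finset.mem_univ _, ht⟩, rfl⟩
    · rintro ⟨j, hj, rfl⟩
      exact (Finset.mem_filter.mp hj).2
  refine ⟨S, hind, heq, ?_⟩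
  rw [heq]
  exact (Finset.card_image_of_injOn (fun a _ b _ h => T_inj h)).symm

end TriCycAux

open TriCycAux

/-- `P` is a triangle packing of `G`: a collection of pairwise vertex-disjoint
triangles, each triangle being given by its set of three pairwise adjacent vertices. -/
def IsTrianglePacking {n : ℕ} (G : SimpleGraph (Fin n)) (P : Finset (Finset (Fin n))) :
    Prop :=
  (∀ t ∈ P, t.card = 3 ∧ ∀ x ∈ t, ∀ y ∈ t, x ≠ y → G.Adj x y) ∧
    ∀ t ∈ P, ∀ s ∈ P, t ≠ s → Disjoint t s

/-- The packing `P` covers the vertex `x`. -/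
def Covers {n : ℕ} (P : Finset (Finset (Fin n))) (x : Fin n) : Prop := ∃ t ∈ P, x ∈ t

/-- For every `r ≥ 2` there is a finite simple graph (TriCyc_r) with `2r` distinguished
vertices `v₁,…,v_r, v̄₁,…,v̄_r` such that it has no triangle packing of size greater
than `r`, it has exactly two triangle packings `P, P̄` of size `r`, `P` covers all
`v_i` and no `v̄_i`, and `P̄` covers all `v̄_i` and no `v_i`. -/
theorem exists_triCyc_gadget (r : ℕ) (hr : 2 ≤ r) :
    ∃ (n : ℕ) (G : SimpleGraph (Fin n)) (d : Fin r ⊕ Fin r → Fin n),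
      Function.Injective d ∧
      ∃ P Pb : Finset (Finset (Fin n)),
        P ≠ Pb ∧
        IsTrianglePacking G P ∧ IsTrianglePacking G Pb ∧
        P.card = r ∧ Pb.card = r ∧
        (∀ Q : Finset (Finset (Fin n)), IsTrianglePacking G Q → Q.card ≤ r) ∧
        (∀ Q : Finset (Finset (Fin n)), IsTrianglePacking G Q → Q.card = r →
          Q = P ∨ Q = Pb) ∧
        (∀ i : Fin r, Covers P (d (Sum.inl i))) ∧
        (∀ i : Fin r, ¬ Covers P (d (Sum.inr i))) ∧
        (∀ i : Fin r, Covers Pb (d (Sum.inr i))) ∧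
        (∀ i : Fin r, ¬ Covers Pb (d (Sum.inl i))) := by
  haveI : NeZero r := ⟨by omega⟩
  refine ⟨4*r, G, Sum.elim (fun i => A (Ep i)) (fun i => A (Op i)), ?_,
    evens.image T, odds.image T, ?_, ?_, ?_, ?_, ?_, ?_, ?_, ?_, ?_, ?_, ?_⟩
  · -- injectivity of d
    intro a b h
    rcases a with a | a <;> rcases b with b | b <;> simp only [Sum.elim_inl, Sum.elim_inr] at h
    · rw [Ep_inj (A_inj h)]
    · exact absurd (A_inj h) (Ep_ne_Op a b)
    · exact absurd (A_inj h).symm (Ep_ne_Op b a)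
    · rw [Op_inj (A_inj h)]
  · -- P ≠ Pb
    intro h
    have h1 : T (Ep (⟨0, by omega⟩ : Fin r)) ∈ evens.image (T (r := r)) :=
      Finset.mem_image.mpr ⟨_, Finset.mem_image.mpr ⟨_, Finset.mem_univ _, rfl⟩, rfl⟩
    rw [h] at h1
    rcases Finset.mem_image.mp h1 with ⟨j, hj, hjeq⟩
    rcases Finset.mem_image.mp hj with ⟨k, _, rfl⟩
    exact Ep_ne_Op ⟨0, by omega⟩ k (T_inj hjeq).symm
  · exact packing_of_indep evens_indep
  · exact packing_of_indep (odds_indep hr)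
  · rw [Finset.card_image_of_injOn (fun a _ b _ h => T_inj h), evens_card]
  · rw [Finset.card_image_of_injOn (fun a _ b _ h => T_inj h), odds_card]
  · -- bound
    intro Q hQ
    obtain ⟨S, hind, heq, hcard⟩ := packing_structure hr hQ.1 hQ.2
    rw [← hcard]
    exact indep_card_le hind
  · -- uniqueness
    intro Q hQ hcr
    obtain ⟨S, hind, heq, hcard⟩ := packing_structure hr hQ.1 hQ.2
    rcases indep_eq hr hind (hcard.trans hcr) with hS | hS
    · left; rw [heq, hS]
    · right; rw [heq, hS]
  · -- P covers v_i
    intro i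
    exact ⟨T (Ep i), Finset.mem_image.mpr ⟨_, Finset.mem_image.mpr ⟨i, Finset.mem_univ _, rfl⟩,
      rfl⟩, A_mem_T_iff.mpr rfl⟩
  · -- P misses v̄_i
    rintro i ⟨t, ht, hmem⟩
    rcases Finset.mem_image.mp ht with ⟨j, hj, rfl⟩
    rcases Finset.mem_image.mp hj with ⟨k, _, rfl⟩
    exact Ep_ne_Op k i (A_mem_T_iff.mp hmem).symm
  · -- Pb covers v̄_i
    intro i
    exact ⟨T (Op i), Finset.mem_image.mpr ⟨_, Finset.mem_image.mpr ⟨i, Finset.mem_univ _, rfl⟩,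
      rfl⟩, A_mem_T_iff.mpr rfl⟩
  · -- Pb misses v_i
    rintro i ⟨t, ht, hmem⟩
    rcases Finset.mem_image.mp ht with ⟨j, hj, rfl⟩
    rcases Finset.mem_image.mp hj with ⟨k, _, rfl⟩
    exact Ep_ne_Op i k (A_mem_T_iff.mp hmem)
end

section
/- For every integer r ≥ 2 there exists a finite simple graph SelGadget_r with 2r distinguished vertices v₁,…,v_r and v̄₁,…,v̄_r such that: (1) SelGadget_r has exactly two triangle packings of size 3r, denoted P₀ and P₁; (2) P₀ covers all of v₁,…,v_r and none of v̄₁,…,v̄_r; (3) P₁ covers all of v̄₁,…,v̄_r and none of v₁,…,v_r; (4) SelGadget_r has no triangle packing of size greater than 3r. -/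
/-!
The gadget is a cycle of `m = 6r` triangles: spine vertices `s_j` on a cycle of length `m`,
and for each `j` the triangle `{s_j, s_{j+1}, p_j}` with its own apex `p_j`. For `m ≥ 4` these
are the only triangles of the graph, and two of them meet exactly when they are consecutive, so
triangle packings are the independent sets of the cycle `C_m`. Pairing position `2i` with
`2i + 1` shows that `C_{2c}` has independence number `c`; a maximum independent set meets every
pair, and once it contains an odd position it contains the next one, so it is either the set of
even or the set of odd positions. Take `v_i = p_{2i}` and `v̄_i = p_{2i+1}`.
-/

open Finset

theorem val_finRotate {m : ℕ} (j : Fin m) :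
    (finRotate m j : ℕ) = if (j : ℕ) + 1 = m then 0 else (j : ℕ) + 1 := by
  cases m with
  | zero => exact j.elim0
  | succ n => rw [coe_finRotate]; simp [Fin.ext_iff]

theorem finRotate_ne_self {m : ℕ} (hm : 2 ≤ m) (j : Fin m) : finRotate m j ≠ j :=
  Equiv.Perm.mem_support.1 (by simp [support_finRotate_of_le hm])

theorem forall_of_finRotate_invariant {c : ℕ} {p : Fin c → Prop}
    (hstep : ∀ i, p i → p (finRotate c i)) {i₀ : Fin c} (h₀ : p i₀) (i : Fin c) : p i := by
  rcases lt_or_ge c 2 with hc | hc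
  · have : Subsingleton (Fin c) := Fin.subsingleton_iff_le_one.2 (by omega)
    rwa [Subsingleton.elim i i₀]
  · obtain ⟨n, rfl⟩ := (isCycle_finRotate_of_le hc).exists_pow_eq
      (finRotate_ne_self hc i₀) (finRotate_ne_self hc i)
    induction n with
    | zero => exact h₀
    | succ n ih => rw [pow_succ', Equiv.Perm.mul_apply]; exact hstep _ ih

def IsCycleIndep {m : ℕ} (S : Finset (Fin m)) : Prop := ∀ j ∈ S, finRotate m j ∉ S

namespace CycleParity

variable {c : ℕ}

def evenIdx (i : Fin c) : Fin (2 * c) := ⟨2 * i, by omega⟩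

def oddIdx (i : Fin c) : Fin (2 * c) := ⟨2 * i + 1, by omega⟩

def half (j : Fin (2 * c)) : Fin c := ⟨j / 2, by omega⟩

theorem evenIdx_injective : Function.Injective (evenIdx (c := c)) := fun i i' h => by
  simpa [evenIdx, Fin.ext_iff] using h

theorem oddIdx_injective : Function.Injective (oddIdx (c := c)) := fun i i' h => by
  simpa [oddIdx, Fin.ext_iff] using h

theorem evenIdx_ne_oddIdx (i i' : Fin c) : evenIdx i ≠ oddIdx i' := by
  simp only [evenIdx, oddIdx, ne_eq, Fin.ext_iff]; omega

theorem eq_evenIdx_or_eq_oddIdx (j : Fin (2 * c)) :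
    j = evenIdx (half j) ∨ j = oddIdx (half j) := by
  simp only [evenIdx, oddIdx, half, Fin.ext_iff]; omega

theorem finRotate_evenIdx (i : Fin c) : finRotate (2 * c) (evenIdx i) = oddIdx i := by
  ext; rw [val_finRotate, if_neg (by simp only [evenIdx]; omega)]; rfl

theorem finRotate_oddIdx (i : Fin c) :
    finRotate (2 * c) (oddIdx i) = evenIdx (finRotate c i) := by
  ext; rw [val_finRotate]; have := val_finRotate i
  split <;> split at this <;> simp only [evenIdx, oddIdx] at * <;> omega

theorem isCycleIndep_image_evenIdx : IsCycleIndep (univ.image (evenIdx (c := c))) := by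
  simp only [IsCycleIndep, mem_image, mem_univ, true_and]
  rintro _ ⟨i, rfl⟩ ⟨i', h⟩
  exact evenIdx_ne_oddIdx i' i (h.trans (finRotate_evenIdx i))

theorem isCycleIndep_image_oddIdx : IsCycleIndep (univ.image (oddIdx (c := c))) := by
  simp only [IsCycleIndep, mem_image, mem_univ, true_and]
  rintro _ ⟨i, rfl⟩ ⟨i', h⟩
  exact evenIdx_ne_oddIdx _ i' (h.trans (finRotate_oddIdx i)).symm

theorem card_image_evenIdx : #(univ.image (evenIdx (c := c))) = c := by
  rw [card_image_of_injective _ evenIdx_injective, card_univ, Fintype.card_fin]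

theorem card_image_oddIdx : #(univ.image (oddIdx (c := c))) = c := by
  rw [card_image_of_injective _ oddIdx_injective, card_univ, Fintype.card_fin]

variable {S : Finset (Fin (2 * c))}

theorem injOn_half (hS : IsCycleIndep S) : Set.InjOn half (S : Set (Fin (2 * c))) := by
  intro j hj k hk hjk
  rcases eq_evenIdx_or_eq_oddIdx j with hj' | hj' <;>
    rcases eq_evenIdx_or_eq_oddIdx k with hk' | hk' <;> rw [hjk] at hj'
  · exact hj'.trans hk'.symm
  · exact (hS j hj (by rwa [hj', finRotate_evenIdx, ← hk'])).elim
  · exact (hS k hk (by rwa [hk', finRotate_evenIdx, ← hj'])).elim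
  · exact hj'.trans hk'.symm

theorem card_le_of_isCycleIndep (hS : IsCycleIndep S) : #S ≤ c := by
  simpa using card_le_card_of_injOn half (fun _ _ => mem_coe.2 (mem_univ _)) (injOn_half hS)

theorem eq_image_evenIdx_or_oddIdx (hS : IsCycleIndep S) (hcard : #S = c) :
    S = univ.image evenIdx ∨ S = univ.image oddIdx := by
  have hhalf : S.image half = univ :=
    eq_univ_of_card _ (by rw [card_image_of_injOn (injOn_half hS), hcard, Fintype.card_fin])
  have hpair : ∀ i, evenIdx i ∈ S ∨ oddIdx i ∈ S := by
    intro i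
    obtain ⟨j, hj, rfl⟩ := mem_image.1 (hhalf ▸ mem_univ i)
    rcases eq_evenIdx_or_eq_oddIdx j with h | h <;> rw [h] at hj <;> simp [hj]
  have hstep : ∀ i, oddIdx i ∈ S → oddIdx (finRotate c i) ∈ S := fun i hi =>
    (hpair _).resolve_left (finRotate_oddIdx i ▸ hS _ hi)
  by_cases hodd : ∃ i, oddIdx i ∈ S
  · obtain ⟨i₀, h₀⟩ := hodd
    refine .inr (eq_of_subset_of_card_le ?_ ?_).symm
    · simpa [subset_iff] using forall_of_finRotate_invariant hstep h₀
    · rw [card_image_oddIdx, hcard]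
  · push Not at hodd
    refine .inl (eq_of_subset_of_card_le ?_ ?_).symm
    · simpa [subset_iff] using fun i => (hpair i).resolve_right (hodd i)
    · rw [card_image_evenIdx, hcard]

end CycleParity

namespace TriangleCycle

variable {m : ℕ}

def spine (j : Fin m) : Fin (m + m) := Fin.castAdd m j

def apex (j : Fin m) : Fin (m + m) := Fin.natAdd m j

theorem spine_or_apex (x : Fin (m + m)) : (∃ a, x = spine a) ∨ ∃ a, x = apex a := by
  induction x using Fin.addCases with
  | left a => exact .inl ⟨a, rfl⟩
  | right a => exact .inr ⟨a, rfl⟩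

@[simp] theorem spine_inj {a b : Fin m} : spine a = spine b ↔ a = b := Fin.castAdd_inj

@[simp] theorem apex_inj {a b : Fin m} : apex a = apex b ↔ a = b := Fin.natAdd_inj m

theorem apex_injective : Function.Injective (apex (m := m)) := fun _ _ => apex_inj.1

@[simp] theorem spine_ne_apex (a b : Fin m) : spine a ≠ apex b := by
  simp only [spine, apex, ne_eq, Fin.ext_iff, Fin.val_castAdd, Fin.val_natAdd]; omega

@[simp] theorem apex_ne_spine (a b : Fin m) : apex a ≠ spine b := (spine_ne_apex b a).symm

def triangle (j : Fin m) : Finset (Fin (m + m)) := {spine j, spine (finRotate m j), apex j}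

theorem spine_mem_triangle {a j : Fin m} :
    spine a ∈ triangle j ↔ a = j ∨ a = finRotate m j := by
  simp only [triangle, mem_insert, mem_singleton, spine_inj, spine_ne_apex, or_false]

theorem apex_mem_triangle {a j : Fin m} : apex a ∈ triangle j ↔ a = j := by
  simp only [triangle, mem_insert, mem_singleton, apex_ne_spine, apex_inj, false_or]

theorem triangle_injective : Function.Injective (triangle (m := m)) := fun _ _ h =>
  apex_mem_triangle.1 (h ▸ apex_mem_triangle.2 rfl)

theorem card_image_triangle (A : Finset (Fin m)) : #(A.image triangle) = #A :=
  card_image_of_injective _ triangle_injective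

theorem card_triangle (hm : 2 ≤ m) (j : Fin m) : #(triangle j) = 3 := by
  rw [triangle, card_insert_of_notMem, card_pair (spine_ne_apex _ _)]
  simpa only [mem_insert, mem_singleton, spine_inj, spine_ne_apex, or_false]
    using (finRotate_ne_self hm j).symm

theorem disjoint_triangle_iff {i j : Fin m} :
    Disjoint (triangle i) (triangle j) ↔ i ≠ j ∧ j ≠ finRotate m i ∧ i ≠ finRotate m j := by
  rw [show triangle i = {spine i, spine (finRotate m i), apex i} from rfl]
  simp only [disjoint_insert_left, disjoint_singleton_left, spine_mem_triangle, apex_mem_triangle,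
    EmbeddingLike.apply_eq_iff_eq]
  grind

def graph (m : ℕ) : SimpleGraph (Fin (m + m)) where
  Adj x y := x ≠ y ∧ ∃ j, x ∈ triangle j ∧ y ∈ triangle j
  symm := ⟨fun _ _ ⟨hne, j, hx, hy⟩ => ⟨hne.symm, j, hy, hx⟩⟩
  loopless := ⟨fun _ h => h.1 rfl⟩

theorem graph_adj {x y : Fin (m + m)} :
    (graph m).Adj x y ↔ x ≠ y ∧ ∃ j, x ∈ triangle j ∧ y ∈ triangle j := Iff.rfl

theorem mem_triangle_of_adj_apex {i : Fin m} {y : Fin (m + m)} (h : (graph m).Adj (apex i) y) :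
    y ∈ triangle i := by
  obtain ⟨-, j, hi, hy⟩ := graph_adj.1 h
  rwa [apex_mem_triangle.1 hi]

theorem adj_spine_spine {a b : Fin m} (h : (graph m).Adj (spine a) (spine b)) :
    a ≠ b ∧ (b = finRotate m a ∨ a = finRotate m b) := by
  obtain ⟨hne, j, ha, hb⟩ := graph_adj.1 h
  rw [spine_mem_triangle] at ha hb
  refine ⟨fun hab => hne (hab ▸ rfl), ?_⟩
  rcases ha with rfl | rfl <;> rcases hb with rfl | rfl <;> simp_all

theorem not_triangle_in_cycle (hm : 4 ≤ m) {a b c : Fin m}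
    (hab : a ≠ b ∧ (b = finRotate m a ∨ a = finRotate m b))
    (hac : a ≠ c ∧ (c = finRotate m a ∨ a = finRotate m c))
    (hbc : b ≠ c ∧ (c = finRotate m b ∨ b = finRotate m c)) : False := by
  simp only [ne_eq, Fin.ext_iff, val_finRotate] at hab hac hbc
  split_ifs at hab hac hbc <;> omega

theorem exists_eq_triangle_of_isNClique (hm : 4 ≤ m) {t : Finset (Fin (m + m))}
    (ht : (graph m).IsNClique 3 t) : ∃ j, t = triangle j := by
  obtain ⟨i, hi⟩ : ∃ i, apex i ∈ t := by
    obtain ⟨x, y, z, hxy, hxz, hyz, rfl⟩ := SimpleGraph.is3Clique_iff.1 ht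
    by_contra! h
    have spine_of_mem : ∀ w ∈ ({x, y, z} : Finset _), ∃ a, w = spine a := fun w hw =>
      (spine_or_apex w).resolve_right fun ⟨a, ha⟩ => h a (ha ▸ hw)
    obtain ⟨a, rfl⟩ := spine_of_mem x (by simp)
    obtain ⟨b, rfl⟩ := spine_of_mem y (by simp)
    obtain ⟨c, rfl⟩ := spine_of_mem z (by simp)
    exact not_triangle_in_cycle hm (adj_spine_spine hxy) (adj_spine_spine hxz)
      (adj_spine_spine hyz)
  refine ⟨i, eq_of_subset_of_card_le (fun y hy => ?_)
    (by rw [ht.card_eq, card_triangle (by omega)])⟩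
  by_cases hyi : y = apex i
  · exact hyi ▸ apex_mem_triangle.2 rfl
  · exact mem_triangle_of_adj_apex (ht.isClique hi hy (Ne.symm hyi))

theorem covers_image_triangle_apex_iff {A : Finset (Fin m)} {j : Fin m} :
    Covers (A.image triangle) (apex j) ↔ j ∈ A := by
  simp [Covers, apex_mem_triangle]

theorem isTrianglePacking_image_triangle (hm : 2 ≤ m) {A : Finset (Fin m)}
    (hA : IsCycleIndep A) : IsTrianglePacking (graph m) (A.image triangle) := by
  refine ⟨forall_mem_image.2 fun j _ =>
    ⟨card_triangle hm j, fun x hx y hy hxy => ⟨hxy, j, hx, hy⟩⟩, ?_⟩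
  simp only [forall_mem_image]
  intro i hi j hj hne
  exact disjoint_triangle_iff.2
    ⟨fun h => hne (h ▸ rfl), fun h => hA i hi (h ▸ hj), fun h => hA j hj (h ▸ hi)⟩

theorem exists_isCycleIndep_of_isTrianglePacking (hm : 4 ≤ m)
    {Q : Finset (Finset (Fin (m + m)))} (hQ : IsTrianglePacking (graph m) Q) :
    ∃ A : Finset (Fin m), IsCycleIndep A ∧ Q = A.image triangle := by
  refine ⟨univ.filter (triangle · ∈ Q), fun j hj hj' => ?_, ?_⟩
  · simp only [mem_filter, mem_univ, true_and] at hj hj'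
    have hne : triangle j ≠ triangle (finRotate m j) :=
      triangle_injective.ne (finRotate_ne_self (by omega) j).symm
    exact (disjoint_triangle_iff.1 (hQ.2 _ hj _ hj' hne)).2.1 rfl
  · ext t
    simp only [mem_image, mem_filter, mem_univ, true_and]
    refine ⟨fun ht => ?_, fun ⟨j, hj, hjt⟩ => hjt ▸ hj⟩
    obtain ⟨j, rfl⟩ := exists_eq_triangle_of_isNClique hm ⟨(hQ.1 t ht).2, (hQ.1 t ht).1⟩
    exact ⟨j, ht, rfl⟩

end TriangleCycle

open CycleParity TriangleCycle in
/-- For every `r ≥ 2` there is a finite simple graph (SelGadget_r) with `2r`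
distinguished vertices `v₁,…,v_r, v̄₁,…,v̄_r` such that it has exactly two triangle
packings `P₀, P₁` of size `3r`, `P₀` covers all `v_i` and no `v̄_i`, `P₁` covers all
`v̄_i` and no `v_i`, and it has no triangle packing of size greater than `3r`. -/
theorem exists_selector_gadget (r : ℕ) (hr : 2 ≤ r) :
    ∃ (n : ℕ) (G : SimpleGraph (Fin n)) (d : Fin r ⊕ Fin r → Fin n),
      Function.Injective d ∧
      ∃ P₀ P₁ : Finset (Finset (Fin n)),
        P₀ ≠ P₁ ∧
        IsTrianglePacking G P₀ ∧ IsTrianglePacking G P₁ ∧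
        P₀.card = 3 * r ∧ P₁.card = 3 * r ∧
        (∀ Q : Finset (Finset (Fin n)), IsTrianglePacking G Q → Q.card = 3 * r →
          Q = P₀ ∨ Q = P₁) ∧
        (∀ i : Fin r, Covers P₀ (d (Sum.inl i))) ∧
        (∀ i : Fin r, ¬ Covers P₀ (d (Sum.inr i))) ∧
        (∀ i : Fin r, Covers P₁ (d (Sum.inr i))) ∧
        (∀ i : Fin r, ¬ Covers P₁ (d (Sum.inl i))) ∧
        (∀ Q : Finset (Finset (Fin n)), IsTrianglePacking G Q → Q.card ≤ 3 * r) := by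
  set c := 3 * r
  have hm : 4 ≤ 2 * c := by omega
  let ι : Fin r → Fin c := Fin.castLE (by omega)
  let P₀ := (univ.image evenIdx).image (triangle (m := 2 * c))
  let P₁ := (univ.image oddIdx).image (triangle (m := 2 * c))
  have hP₀ : ∀ i, Covers P₀ (apex (evenIdx i)) ∧ ¬ Covers P₀ (apex (oddIdx i)) := fun i => by
    simp [P₀, covers_image_triangle_apex_iff, evenIdx_ne_oddIdx]
  have hP₁ : ∀ i, Covers P₁ (apex (oddIdx i)) ∧ ¬ Covers P₁ (apex (evenIdx i)) := fun i => by
    simp [P₁, covers_image_triangle_apex_iff, (evenIdx_ne_oddIdx _ _).symm]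
  refine ⟨2 * c + 2 * c, graph (2 * c), Sum.elim (apex ∘ evenIdx ∘ ι) (apex ∘ oddIdx ∘ ι),
    ?_, P₀, P₁, fun h => (hP₁ (ι ⟨0, by omega⟩)).2 (h ▸ (hP₀ _).1),
    isTrianglePacking_image_triangle (by omega) isCycleIndep_image_evenIdx,
    isTrianglePacking_image_triangle (by omega) isCycleIndep_image_oddIdx,
    by rw [card_image_triangle, card_image_evenIdx], by rw [card_image_triangle, card_image_oddIdx],
    fun Q hQ hcard => ?_, fun i => (hP₀ (ι i)).1, fun i => (hP₀ (ι i)).2,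
    fun i => (hP₁ (ι i)).1, fun i => (hP₁ (ι i)).2, fun Q hQ => ?_⟩
  · refine (apex_injective.comp (evenIdx_injective.comp (Fin.castLE_injective _))).sumElim
      (apex_injective.comp (oddIdx_injective.comp (Fin.castLE_injective _))) fun i j => ?_
    simp [evenIdx_ne_oddIdx]
  · obtain ⟨A, hA, rfl⟩ := exists_isCycleIndep_of_isTrianglePacking hm hQ
    rw [card_image_triangle] at hcard
    rcases eq_image_evenIdx_or_oddIdx hA hcard with rfl | rfl
    exacts [.inl rfl, .inr rfl]
  · obtain ⟨A, hA, rfl⟩ := exists_isCycleIndep_of_isTrianglePacking hm hQ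
    exact (card_image_triangle A).trans_le (card_le_of_isCycleIndep hA)
end

section
/- For every integer r ≥ 4 there exists a finite simple graph LitGadget_r with r distinguished vertices v₁,…,v_r such that: (1) there is a triangle packing of size 3r − 1 that covers none of v₁,…,v_r; (2) there is exactly one triangle packing of size 3r, and it covers all of v₁,…,v_r; (3) there is no triangle packing of size greater than 3r. -/
/-!
Take a strip of `6r - 1` triangles `T_i = {i, i + 1, a_i}` hanging off the path `0, 1, …, 6r - 1`,
each with its own apex `a_i`. Every triangle of this graph is some `T_i`, and `T_i`, `T_j` are
disjoint exactly when `|i - j| ≥ 2`; so packings are the index sets in `{0, …, 6r - 2}` with gaps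
of at least two. There are at most `3r` such indices, and the even ones form the only maximum
set. With `v_i` the apex of `T_{2i}`, the odd triangles give a packing of size `3r - 1` that
misses every `v_i`.
-/

open Finset

theorem isTrianglePacking_image {n : ℕ} {G : SimpleGraph (Fin n)} {ι : Type*} [DecidableEq ι]
    {s : Finset ι} {f : ι → Finset (Fin n)} (hf : ∀ i ∈ s, G.IsNClique 3 (f i))
    (hd : (s : Set ι).PairwiseDisjoint f) : IsTrianglePacking G (s.image f) := by
  simp only [IsTrianglePacking, mem_image, forall_exists_index, and_imp, forall_apply_eq_imp_iff₂]
  refine ⟨fun i hi => ⟨(hf i hi).card_eq, (hf i hi).isClique⟩, fun i hi j hj hij => ?_⟩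
  exact hd hi hj fun h => hij (h ▸ rfl)

def IsTwoSeparated (I : Finset ℕ) : Prop :=
  (I : Set ℕ).Pairwise fun i j => i + 2 ≤ j ∨ j + 2 ≤ i

namespace IsTwoSeparated

variable {I : Finset ℕ} {k c : ℕ}

theorem injOn_add_div_two (hI : IsTwoSeparated I) (c : ℕ) :
    Set.InjOn (fun i => (i + c) / 2) I := by
  intro i hi j hj hij
  by_contra hne
  have := hI hi hj hne
  simp only at hij
  omega

theorem image_add_div_two_subset (hbd : I ⊆ range (2 * k - 1)) (hc : c ≤ 1) :
    I.image (fun i => (i + c) / 2) ⊆ range k := by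
  intro q hq
  obtain ⟨i, hi, rfl⟩ := mem_image.1 hq
  have := mem_range.1 (hbd hi)
  exact mem_range.2 (by omega)

theorem card_le (hI : IsTwoSeparated I) (hbd : I ⊆ range (2 * k - 1)) : I.card ≤ k := by
  calc I.card = (I.image fun i => (i + 0) / 2).card :=
        (card_image_of_injOn (hI.injOn_add_div_two 0)).symm
    _ ≤ (range k).card := card_le_card (image_add_div_two_subset hbd zero_le_one)
    _ = k := card_range k

theorem image_add_div_two_eq_range (hI : IsTwoSeparated I) (hbd : I ⊆ range (2 * k - 1))
    (hcard : I.card = k) (hc : c ≤ 1) : I.image (fun i => (i + c) / 2) = range k :=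
  eq_of_subset_of_card_le (image_add_div_two_subset hbd hc) (by
    rw [card_image_of_injOn (hI.injOn_add_div_two c), hcard, card_range])

/-- Both `i ↦ ⌊i/2⌋` and `i ↦ ⌈i/2⌉` map `I` bijectively onto `range k`, so they have the same
sum over `I`; as `⌊i/2⌋ ≤ ⌈i/2⌉` with equality exactly for even `i`, every element is even. -/
theorem eq_image_two_mul (hI : IsTwoSeparated I) (hbd : I ⊆ range (2 * k - 1))
    (hcard : I.card = k) : I = (range k).image (2 * ·) := by
  have hsum (c : ℕ) (hc : c ≤ 1) : ∑ i ∈ I, (i + c) / 2 = ∑ q ∈ range k, q := by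
    rw [← hI.image_add_div_two_eq_range hbd hcard hc, sum_image (hI.injOn_add_div_two c)]
  have heven : ∀ i ∈ I, 2 * ((i + 0) / 2) = i := by
    intro i hi
    have := (sum_eq_sum_iff_of_le fun i _ => Nat.div_le_div_right (by omega)).1
      ((hsum 0 zero_le_one).trans (hsum 1 le_rfl).symm) i hi
    omega
  rw [← hI.image_add_div_two_eq_range hbd hcard zero_le_one, image_image]
  exact ((image_congr fun i hi => heven i hi).trans image_id').symm

end IsTwoSeparated

theorem isTwoSeparated_image_two_mul_add (k c : ℕ) :
    IsTwoSeparated ((range k).image fun q => 2 * q + c) := by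
  simp only [IsTwoSeparated, coe_image, Set.Pairwise, Set.mem_image, forall_exists_index,
    and_imp, forall_apply_eq_imp_iff₂]
  intro p _ q _ hne
  have : p ≠ q := fun h => hne (h ▸ rfl)
  omega

theorem image_two_mul_add_subset_range {k c m : ℕ} (h : 2 * k + c ≤ m + 1) :
    (range k).image (fun q => 2 * q + c) ⊆ range m := by
  intro i hi
  simp only [mem_image, mem_range] at hi ⊢
  omega

theorem card_image_two_mul_add (k c : ℕ) : ((range k).image fun q => 2 * q + c).card = k := by
  rw [card_image_of_injective _ fun _ _ h => by simpa using h, card_range]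

namespace TriangleStrip

/-- The `i`-th triangle of the strip: consecutive path vertices `i`, `i + 1` on `0, …, m`, and
its own apex `m + 1 + i`. -/
def triangle (m i : ℕ) : Finset (Fin (2 * m + 1)) :=
  univ.filter fun x => (x : ℕ) = i ∨ (x : ℕ) = i + 1 ∨ (x : ℕ) = m + 1 + i

def graph (m : ℕ) : SimpleGraph (Fin (2 * m + 1)) where
  Adj x y := x ≠ y ∧ ∃ i < m, x ∈ triangle m i ∧ y ∈ triangle m i
  symm := ⟨fun _ _ ⟨hxy, i, hi, hx, hy⟩ => ⟨hxy.symm, i, hi, hy, hx⟩⟩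
  loopless := ⟨fun _ h => h.1 rfl⟩

variable {m i j k : ℕ} {I : Finset ℕ}

theorem graph_adj {x y : Fin (2 * m + 1)} :
    (graph m).Adj x y ↔ x ≠ y ∧ ∃ i < m, x ∈ triangle m i ∧ y ∈ triangle m i :=
  Iff.rfl

@[simp]
theorem mem_triangle {x : Fin (2 * m + 1)} :
    x ∈ triangle m i ↔ (x : ℕ) = i ∨ (x : ℕ) = i + 1 ∨ (x : ℕ) = m + 1 + i := by
  simp [triangle]

theorem isNClique_triangle (hi : i < m) : (graph m).IsNClique 3 (triangle m i) := by
  refine ⟨fun x hx y hy hxy => graph_adj.2 ⟨hxy, i, hi, hx, hy⟩, card_eq_three.2 ?_⟩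
  refine ⟨⟨i, by omega⟩, ⟨i + 1, by omega⟩, ⟨m + 1 + i, by omega⟩, ?_, ?_, ?_,
    by ext; simp [Fin.ext_iff]⟩ <;> simp only [ne_eq, Fin.ext_iff] <;> omega

theorem triangle_inj (hi : i < m) (hj : j < m) : triangle m i = triangle m j ↔ i = j := by
  refine ⟨fun h => ?_, congrArg _⟩
  have hi' := h ▸ (mem_triangle (x := ⟨i, by omega⟩) (i := i)).2 (Or.inl rfl)
  have hj' := h.symm ▸ (mem_triangle (x := ⟨j, by omega⟩) (i := j)).2 (Or.inl rfl)
  simp only [mem_triangle] at hi' hj'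
  omega

theorem disjoint_triangle_iff (hi : i < m) (hj : j < m) :
    Disjoint (triangle m i) (triangle m j) ↔ i + 2 ≤ j ∨ j + 2 ≤ i := by
  refine ⟨fun h => ?_, fun h => disjoint_left.2 fun x hx hx' => ?_⟩
  · by_contra! hij
    have hmax : (⟨max i j, by omega⟩ : Fin (2 * m + 1)) ∈ triangle m i ∩ triangle m j := by
      simp only [mem_inter, mem_triangle]
      omega
    exact disjoint_iff_inter_eq_empty.1 h ▸ hmax |> notMem_empty _
  · simp only [mem_triangle] at hx hx'
    omega

/-- The three edges of a triangle lie in strip triangles `T_i`, `T_j`, `T_k`; two of these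
coincide, since an apex lies in a single `T_i` and three path vertices are never pairwise
consecutive. -/
theorem eq_triangle_of_isNClique {t : Finset (Fin (2 * m + 1))}
    (ht : (graph m).IsNClique 3 t) : ∃ i < m, t = triangle m i := by
  obtain ⟨a, b, c, hab, hac, hbc, rfl⟩ := SimpleGraph.is3Clique_iff.1 ht
  obtain ⟨hab, i, hi, hai, hbi⟩ := graph_adj.1 hab
  obtain ⟨hac, k, hk, hak, hck⟩ := graph_adj.1 hac
  obtain ⟨hbc, j, hj, hbj, hcj⟩ := graph_adj.1 hbc
  have hcommon : ∃ l < m, a ∈ triangle m l ∧ b ∈ triangle m l ∧ c ∈ triangle m l := by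
    simp only [mem_triangle, ne_eq, Fin.ext_iff] at *
    rcases (by omega : i = j ∨ i = k ∨ j = k) with rfl | rfl | rfl
    exacts [⟨i, hi, hai, hbi, hcj⟩, ⟨i, hi, hai, hbi, hck⟩, ⟨j, hj, hak, hbj, hcj⟩]
  obtain ⟨l, hl, hal, hbl, hcl⟩ := hcommon
  have hcard : (triangle m l).card ≤ ({a, b, c} : Finset _).card :=
    ((isNClique_triangle hl).card_eq.trans ht.card_eq.symm).le
  refine ⟨l, hl, eq_of_subset_of_card_le ?_ hcard⟩
  simp only [insert_subset_iff, singleton_subset_iff]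
  exact ⟨hal, hbl, hcl⟩

theorem isTrianglePacking_image_triangle (hI : I ⊆ range m) (hs : IsTwoSeparated I) :
    IsTrianglePacking (graph m) (I.image (triangle m)) := by
  refine isTrianglePacking_image (fun i hi => isNClique_triangle (mem_range.1 (hI hi))) ?_
  intro i hi j hj hij
  exact (disjoint_triangle_iff (mem_range.1 (hI hi)) (mem_range.1 (hI hj))).2 (hs hi hj hij)

theorem card_image_triangle (hI : I ⊆ range m) : (I.image (triangle m)).card = I.card :=
  card_image_of_injOn fun _ hi _ hj h =>
    (triangle_inj (mem_range.1 (hI hi)) (mem_range.1 (hI hj))).1 h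

theorem exists_eq_image_triangle {P : Finset (Finset (Fin (2 * m + 1)))}
    (hP : IsTrianglePacking (graph m) P) :
    ∃ I ⊆ range m, IsTwoSeparated I ∧ P = I.image (triangle m) := by
  refine ⟨(range m).filter (triangle m · ∈ P), filter_subset _ _, ?_, ?_⟩
  · intro i hi j hj hij
    simp only [coe_filter, mem_range, Set.mem_ofPred_eq] at hi hj
    refine (disjoint_triangle_iff hi.1 hj.1).1 (hP.2 _ hi.2 _ hj.2 ?_)
    exact fun h => hij ((triangle_inj hi.1 hj.1).1 h)
  · ext t
    simp only [mem_image, mem_filter, mem_range]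
    refine ⟨fun ht => ?_, fun ⟨i, ⟨_, hi⟩, hit⟩ => hit ▸ hi⟩
    obtain ⟨i, hi, rfl⟩ := eq_triangle_of_isNClique ⟨(hP.1 t ht).2, (hP.1 t ht).1⟩
    exact ⟨i, ⟨hi, ht⟩, rfl⟩

theorem card_le_of_isTrianglePacking {P : Finset (Finset (Fin (2 * (2 * k - 1) + 1)))}
    (hP : IsTrianglePacking (graph (2 * k - 1)) P) : P.card ≤ k := by
  obtain ⟨I, hI, hs, rfl⟩ := exists_eq_image_triangle hP
  exact (card_image_triangle hI).trans_le (hs.card_le hI)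

theorem eq_of_isTrianglePacking_of_card_eq {P : Finset (Finset (Fin (2 * (2 * k - 1) + 1)))}
    (hP : IsTrianglePacking (graph (2 * k - 1)) P) (hcard : P.card = k) :
    P = (range k).image fun q => triangle (2 * k - 1) (2 * q) := by
  obtain ⟨I, hI, hs, rfl⟩ := exists_eq_image_triangle hP
  rw [hs.eq_image_two_mul hI ((card_image_triangle hI).symm.trans hcard), image_image]
  rfl

end TriangleStrip

open TriangleStrip in
theorem exists_literal_gadget_general (r : ℕ) :
    ∃ (n : ℕ) (G : SimpleGraph (Fin n)) (d : Fin r → Fin n),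
      Function.Injective d ∧
      (∃ P : Finset (Finset (Fin n)), IsTrianglePacking G P ∧ P.card = 3 * r - 1 ∧
        ∀ i : Fin r, ¬ Covers P (d i)) ∧
      (∃ P : Finset (Finset (Fin n)), IsTrianglePacking G P ∧ P.card = 3 * r ∧
        (∀ Q : Finset (Finset (Fin n)), IsTrianglePacking G Q → Q.card = 3 * r →
          Q = P) ∧
        ∀ i : Fin r, Covers P (d i)) ∧
      ∀ Q : Finset (Finset (Fin n)), IsTrianglePacking G Q → Q.card ≤ 3 * r := by
  set m := 2 * (3 * r) - 1 with hm
  have hodd : (range (3 * r - 1)).image (fun q => 2 * q + 1) ⊆ range m :=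
    image_two_mul_add_subset_range (by omega)
  have heven : (range (3 * r)).image (fun q => 2 * q + 0) ⊆ range m :=
    image_two_mul_add_subset_range (by omega)
  refine ⟨_, graph m, fun i => ⟨6 * r + 2 * i, by omega⟩, fun i j h => ?_, ?_, ?_,
    fun Q hQ => card_le_of_isTrianglePacking hQ⟩
  · simpa [Fin.ext_iff] using h
  · refine ⟨_, isTrianglePacking_image_triangle hodd (isTwoSeparated_image_two_mul_add _ _), ?_, ?_⟩
    · rw [card_image_triangle hodd, card_image_two_mul_add]
    · simp only [Covers, mem_image, mem_range]
      rintro i ⟨_, ⟨q, hq, rfl⟩, hi⟩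
      simp only [mem_triangle] at hi
      omega
  · refine ⟨_, isTrianglePacking_image_triangle heven (isTwoSeparated_image_two_mul_add _ _),
      by rw [card_image_triangle heven, card_image_two_mul_add], fun Q hQ hQcard => ?_, fun i => ?_⟩
    · rw [eq_of_isTrianglePacking_of_card_eq hQ hQcard, image_image]
      rfl
    · have hi : 2 * (i : ℕ) + 0 ∈ (range (3 * r)).image (fun q => 2 * q + 0) :=
        mem_image_of_mem _ (mem_range.2 (by omega))
      refine ⟨triangle m (2 * i), mem_image_of_mem _ hi, ?_⟩
      simp only [mem_triangle]
      omega

/-- For every `r ≥ 4` there is a finite simple graph (LitGadget_r) with `r`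
distinguished vertices `v₁,…,v_r` such that: there is a triangle packing of size
`3r − 1` covering none of the `v_i`; there is exactly one triangle packing of size
`3r`, and it covers all of the `v_i`; and there is no triangle packing of size greater
than `3r`. -/
theorem exists_literal_gadget (r : ℕ) (hr : 4 ≤ r) :
    ∃ (n : ℕ) (G : SimpleGraph (Fin n)) (d : Fin r → Fin n),
      Function.Injective d ∧
      (∃ P : Finset (Finset (Fin n)), IsTrianglePacking G P ∧ P.card = 3 * r - 1 ∧
        ∀ i : Fin r, ¬ Covers P (d i)) ∧
      (∃ P : Finset (Finset (Fin n)), IsTrianglePacking G P ∧ P.card = 3 * r ∧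
        (∀ Q : Finset (Finset (Fin n)), IsTrianglePacking G Q → Q.card = 3 * r →
          Q = P) ∧
        ∀ i : Fin r, Covers P (d i)) ∧
      ∀ Q : Finset (Finset (Fin n)), IsTrianglePacking G Q → Q.card ≤ 3 * r :=
  exists_literal_gadget_general r
end

section
/- For every integer r ≥ 2 there exists a finite simple graph CLit_r with 2r distinguished vertices v₁,…,v_r and v̄₁,…,v̄_r such that: (1) CLit_r has exactly two C₄-packings of size 3r, denoted P₀ and P₁; (2) P₀ covers all of v₁,…,v_r and none of v̄₁,…,v̄_r; (3) P₁ covers all of v̄₁,…,v̄_r and none of v₁,…,v_r; (4) CLit_r has no C₄-packing of size greater than 3r. -/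
/-- The set of vertices covered by a set of edges. -/
def EdgeSetVerts {n : ℕ} (e : Finset (Sym2 (Fin n))) : Set (Fin n) :=
  {x : Fin n | ∃ f ∈ e, x ∈ f}

/-- `e` is the edge set of a cycle of length four of `G`. -/
def IsC4 {n : ℕ} (G : SimpleGraph (Fin n)) (e : Finset (Sym2 (Fin n))) : Prop :=
  ∃ a b c d : Fin n,
    a ≠ b ∧ a ≠ c ∧ a ≠ d ∧ b ≠ c ∧ b ≠ d ∧ c ≠ d ∧
    G.Adj a b ∧ G.Adj b c ∧ G.Adj c d ∧ G.Adj d a ∧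
    e = {s(a, b), s(b, c), s(c, d), s(d, a)}

/-- `P` is a `C₄`-packing of `G`: a collection of pairwise vertex-disjoint four-cycles,
each four-cycle being given by its edge set. -/
def IsC4Packing {n : ℕ} (G : SimpleGraph (Fin n)) (P : Finset (Finset (Sym2 (Fin n)))) :
    Prop :=
  (∀ e ∈ P, IsC4 G e) ∧
    ∀ e ∈ P, ∀ e' ∈ P, e ≠ e' →
      ∀ x : Fin n, x ∈ EdgeSetVerts e → x ∈ EdgeSetVerts e' → False

/-- The `C₄`-packing `P` covers the vertex `x`. -/
def CoversC4 {n : ℕ} (P : Finset (Finset (Sym2 (Fin n)))) (x : Fin n) : Prop :=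
  ∃ e ∈ P, x ∈ EdgeSetVerts e


namespace CLitAux

def vh (t k : ℕ) : Fin (18*t+36) := ⟨3*(k % (6*t+12)), by
  have := Nat.mod_lt k (y := 6*t+12) (by omega); omega⟩
def va (t k : ℕ) : Fin (18*t+36) := ⟨3*(k % (6*t+12))+1, by
  have := Nat.mod_lt k (y := 6*t+12) (by omega); omega⟩
def vb (t k : ℕ) : Fin (18*t+36) := ⟨3*(k % (6*t+12))+2, by
  have := Nat.mod_lt k (y := 6*t+12) (by omega); omega⟩

def cyc (t k : ℕ) : Finset (Sym2 (Fin (18*t+36))) :=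
  {s(vh t k, va t k), s(va t k, vh t (k+1)), s(vh t (k+1), vb t k), s(vb t k, vh t k)}

def Gr (t : ℕ) : SimpleGraph (Fin (18*t+36)) :=
  SimpleGraph.fromEdgeSet {e | ∃ k < 6*t+12, e ∈ cyc t k}

def Pev (t : ℕ) : Finset (Finset (Sym2 (Fin (18*t+36)))) :=
  (Finset.range (3*t+6)).image (fun i => cyc t (2*i))
def Pod (t : ℕ) : Finset (Finset (Sym2 (Fin (18*t+36)))) :=
  (Finset.range (3*t+6)).image (fun i => cyc t (2*i+1))

lemma modlt (t k : ℕ) : k % (6*t+12) < 6*t+12 := Nat.mod_lt _ (by omega)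

lemma succ_mod_facts (t k : ℕ) (hk : k < 6*t+12) :
    (k+1) % (6*t+12) = k+1 ∨ ((k+1) % (6*t+12) = 0 ∧ k+1 = 6*t+12) := by
  rcases Nat.lt_or_ge (k+1) (6*t+12) with h|h
  · exact Or.inl (Nat.mod_eq_of_lt h)
  · have h2 : k+1 = 6*t+12 := by omega
    right; rw [h2]; simp

lemma mem_verts_cyc {t k : ℕ} {x : Fin (18*t+36)} :
    x ∈ EdgeSetVerts (cyc t k) ↔ x = vh t k ∨ x = va t k ∨ x = vh t (k+1) ∨ x = vb t k := by
  simp only [EdgeSetVerts, cyc, Set.mem_setOf_eq, Finset.mem_insert, Finset.mem_singleton]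
  constructor
  · rintro ⟨f, (rfl|rfl|rfl|rfl), hx⟩ <;> rw [Sym2.mem_iff] at hx <;> tauto
  · rintro (rfl|rfl|rfl|rfl)
    · exact ⟨s(vh t k, va t k), by tauto, by rw [Sym2.mem_iff]; tauto⟩
    · exact ⟨s(vh t k, va t k), by tauto, by rw [Sym2.mem_iff]; tauto⟩
    · exact ⟨s(va t k, vh t (k+1)), by tauto, by rw [Sym2.mem_iff]; tauto⟩
    · exact ⟨s(vb t k, vh t k), by tauto, by rw [Sym2.mem_iff]; tauto⟩

lemma adj_iff {t : ℕ} {x y : Fin (18*t+36)} :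
    (Gr t).Adj x y ↔ x ≠ y ∧ ∃ k < 6*t+12, s(x,y) ∈ cyc t k := by
  rw [Gr, SimpleGraph.fromEdgeSet_adj]
  simp only [Set.mem_setOf_eq]; tauto

lemma mem_cyc {t k : ℕ} {e : Sym2 (Fin (18*t+36))} :
    e ∈ cyc t k ↔ e = s(vh t k, va t k) ∨ e = s(va t k, vh t (k+1)) ∨
      e = s(vh t (k+1), vb t k) ∨ e = s(vb t k, vh t k) := by
  simp [cyc]

lemma isC4_cyc {t k : ℕ} (hk : k < 6*t+12) : IsC4 (Gr t) (cyc t k) := by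
  have e1 : k % (6*t+12) = k := Nat.mod_eq_of_lt hk
  have e2 := succ_mod_facts t k hk
  have d1 : vh t k ≠ va t k := by simp [Fin.ext_iff, vh, va]
  have d2 : vh t k ≠ vh t (k+1) := by simp [Fin.ext_iff, vh]; omega
  have d3 : vh t k ≠ vb t k := by simp [Fin.ext_iff, vh, vb]
  have d4 : va t k ≠ vh t (k+1) := by simp [Fin.ext_iff, va, vh]; omega
  have d5 : va t k ≠ vb t k := by simp [Fin.ext_iff, va, vb]
  have d6 : vh t (k+1) ≠ vb t k := by simp [Fin.ext_iff, vh, vb]; omega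
  exact ⟨vh t k, va t k, vh t (k+1), vb t k, d1, d2, d3, d4, d5, d6,
    adj_iff.mpr ⟨d1, k, hk, by simp [cyc]⟩,
    adj_iff.mpr ⟨d4, k, hk, by simp [cyc]⟩,
    adj_iff.mpr ⟨d6, k, hk, by simp [cyc]⟩,
    adj_iff.mpr ⟨fun h => d3 h.symm, k, hk, by simp [cyc]⟩, rfl⟩

lemma cyc_inj {t k k' : ℕ} (hk : k < 6*t+12) (hk' : k' < 6*t+12)
    (h : cyc t k = cyc t k') : k = k' := by
  have h1 : va t k ∈ EdgeSetVerts (cyc t k) := mem_verts_cyc.mpr (by tauto)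
  rw [h, mem_verts_cyc] at h1
  have e1 : k % (6*t+12) = k := Nat.mod_eq_of_lt hk
  have e1' : k' % (6*t+12) = k' := Nat.mod_eq_of_lt hk'
  rcases h1 with h1|h1|h1|h1 <;>
    (have hv := congrArg Fin.val h1; simp [vh, va, vb] at hv; omega)

lemma classify (t : ℕ) (x : Fin (18*t+36)) :
    ∃ k < 6*t+12, x = vh t k ∨ x = va t k ∨ x = vb t k := by
  have hx := x.isLt
  refine ⟨x.val/3, by omega, ?_⟩
  have e1 : (x.val/3) % (6*t+12) = x.val/3 := Nat.mod_eq_of_lt (by omega)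
  simp only [Fin.ext_iff, vh, va, vb, e1]
  omega

lemma nbr_a {t k : ℕ} {y : Fin (18*t+36)} (hk : k < 6*t+12)
    (h : (Gr t).Adj (va t k) y) : y = vh t k ∨ y = vh t (k+1) := by
  rw [adj_iff] at h
  obtain ⟨-, k', hk', hm⟩ := h
  have e1 : k % (6*t+12) = k := Nat.mod_eq_of_lt hk
  have e1' : k' % (6*t+12) = k' := Nat.mod_eq_of_lt hk'
  rw [mem_cyc] at hm
  rcases hm with hm|hm|hm|hm <;> rw [Sym2.eq_iff] at hm <;>
    rcases hm with ⟨h1, h2⟩|⟨h1, h2⟩ <;>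
    (try (have hv := congrArg Fin.val h1; simp [vh, va, vb] at hv)) <;>
    (try (have hv := congrArg Fin.val h2; simp [vh, va, vb] at hv)) <;>
    first
      | omega
      | (have hkk : k = k' := by omega
         subst hkk; tauto)

lemma nbr_b {t k : ℕ} {y : Fin (18*t+36)} (hk : k < 6*t+12)
    (h : (Gr t).Adj (vb t k) y) : y = vh t k ∨ y = vh t (k+1) := by
  rw [adj_iff] at h
  obtain ⟨-, k', hk', hm⟩ := h
  have e1 : k % (6*t+12) = k := Nat.mod_eq_of_lt hk
  have e1' : k' % (6*t+12) = k' := Nat.mod_eq_of_lt hk'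
  rw [mem_cyc] at hm
  rcases hm with hm|hm|hm|hm <;> rw [Sym2.eq_iff] at hm <;>
    rcases hm with ⟨h1, h2⟩|⟨h1, h2⟩ <;>
    (try (have hv := congrArg Fin.val h1; simp [vh, va, vb] at hv)) <;>
    (try (have hv := congrArg Fin.val h2; simp [vh, va, vb] at hv)) <;>
    first
      | omega
      | (have hkk : k = k' := by omega
         subst hkk; tauto)

lemma parity {t : ℕ} {x y : Fin (18*t+36)} (h : (Gr t).Adj x y) :
    (x.val % 3 = 0 ∧ y.val % 3 ≠ 0) ∨ (x.val % 3 ≠ 0 ∧ y.val % 3 = 0) := by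
  rw [adj_iff] at h
  obtain ⟨-, k', hk', hm⟩ := h
  rw [mem_cyc] at hm
  rcases hm with hm|hm|hm|hm <;> rw [Sym2.eq_iff] at hm <;>
    rcases hm with ⟨h1, h2⟩|⟨h1, h2⟩ <;> subst h1 <;> subst h2 <;>
    simp [vh, va, vb] <;> omega

lemma vh_injmod {t p q : ℕ} (h : vh t p = vh t q) :
    p % (6*t+12) = q % (6*t+12) := by
  have hv := congrArg Fin.val h
  simp only [vh] at hv
  omega

lemma quad_rot {α : Type*} [DecidableEq α] (x1 x2 x3 x4 : α) :
    ({x1, x2, x3, x4} : Finset α) = {x2, x3, x4, x1} := by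
  ext f; simp; tauto

lemma c4_helper {t : ℕ} (a b c d : Fin (18*t+36))
    (hac : a ≠ c) (hbd : b ≠ d)
    (hab : (Gr t).Adj a b) (hbc : (Gr t).Adj b c)
    (hcd : (Gr t).Adj c d) (hda : (Gr t).Adj d a)
    (hbint : b.val % 3 ≠ 0) (hdint : d.val % 3 ≠ 0) :
    ∃ k < 6*t+12, ({s(a, b), s(b, c), s(c, d), s(d, a)} :
      Finset (Sym2 (Fin (18*t+36)))) = cyc t k := by
  obtain ⟨k, hk, hbclass⟩ := classify t b
  obtain ⟨k', hk', hdclass⟩ := classify t d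
  have e1 : k % (6*t+12) = k := Nat.mod_eq_of_lt hk
  have e1' : k' % (6*t+12) = k' := Nat.mod_eq_of_lt hk'
  have esf := succ_mod_facts t k hk
  have esf' := succ_mod_facts t k' hk'
  have hBa : a = vh t k ∨ a = vh t (k+1) := by
    rcases hbclass with rfl|rfl|rfl
    · exact absurd (show (3*(k % (6*t+12)))%3 = 0 by omega) hbint
    · exact nbr_a hk hab.symm
    · exact nbr_b hk hab.symm
  have hBc : c = vh t k ∨ c = vh t (k+1) := by
    rcases hbclass with rfl|rfl|rfl
    · exact absurd (show (3*(k % (6*t+12)))%3 = 0 by omega) hbint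
    · exact nbr_a hk hbc
    · exact nbr_b hk hbc
  have hDc : c = vh t k' ∨ c = vh t (k'+1) := by
    rcases hdclass with rfl|rfl|rfl
    · exact absurd (show (3*(k' % (6*t+12)))%3 = 0 by omega) hdint
    · exact nbr_a hk' hcd.symm
    · exact nbr_b hk' hcd.symm
  have hDa : a = vh t k' ∨ a = vh t (k'+1) := by
    rcases hdclass with rfl|rfl|rfl
    · exact absurd (show (3*(k' % (6*t+12)))%3 = 0 by omega) hdint
    · exact nbr_a hk' hda
    · exact nbr_b hk' hda
  have hkk : k = k' := by
    rcases hBa with ha|ha <;> rcases hDa with ha'|ha' <;>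
      rcases hBc with hc|hc <;> rcases hDc with hc'|hc' <;>
      (have q1 := vh_injmod (ha.symm.trans ha');
       have q2 := vh_injmod (hc.symm.trans hc');
       first
        | omega
        | exact absurd (ha.trans hc.symm) hac)
  subst hkk
  have hBD : (b = va t k ∧ d = vb t k) ∨ (b = vb t k ∧ d = va t k) := by
    rcases hbclass with rfl|rfl|rfl
    · exact absurd (show (3*(k % (6*t+12)))%3 = 0 by omega) hbint
    · rcases hdclass with rfl|rfl|rfl
      · exact absurd (show (3*(k % (6*t+12)))%3 = 0 by omega) hdint
      · exact absurd rfl hbd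
      · exact Or.inl ⟨rfl, rfl⟩
    · rcases hdclass with rfl|rfl|rfl
      · exact absurd (show (3*(k % (6*t+12)))%3 = 0 by omega) hdint
      · exact Or.inr ⟨rfl, rfl⟩
      · exact absurd rfl hbd
  refine ⟨k, hk, ?_⟩
  rcases hBa with rfl|rfl <;> rcases hBc with hc|hc <;>
    rcases hBD with ⟨rfl, rfl⟩|⟨rfl, rfl⟩
  · exact absurd hc.symm hac
  · exact absurd hc.symm hac
  · subst hc
    apply Finset.Subset.antisymm <;> intro f hf <;>
      simp only [cyc, Finset.mem_insert, Finset.mem_singleton] at hf ⊢ <;>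
      rcases hf with rfl|rfl|rfl|rfl <;> simp [Sym2.eq_iff]
  · subst hc
    apply Finset.Subset.antisymm <;> intro f hf <;>
      simp only [cyc, Finset.mem_insert, Finset.mem_singleton] at hf ⊢ <;>
      rcases hf with rfl|rfl|rfl|rfl <;> simp [Sym2.eq_iff]
  · subst hc
    apply Finset.Subset.antisymm <;> intro f hf <;>
      simp only [cyc, Finset.mem_insert, Finset.mem_singleton] at hf ⊢ <;>
      rcases hf with rfl|rfl|rfl|rfl <;> simp [Sym2.eq_iff]
  · subst hc
    apply Finset.Subset.antisymm <;> intro f hf <;>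
      simp only [cyc, Finset.mem_insert, Finset.mem_singleton] at hf ⊢ <;>
      rcases hf with rfl|rfl|rfl|rfl <;> simp [Sym2.eq_iff]
  · exact absurd hc.symm hac
  · exact absurd hc.symm hac

lemma c4_eq_cyc {t : ℕ} {e : Finset (Sym2 (Fin (18*t+36)))}
    (h : IsC4 (Gr t) e) : ∃ k < 6*t+12, e = cyc t k := by
  obtain ⟨a, b, c, d, hab', hac, had, hbc', hbd, hcd', hab, hbc, hcd, hda, rfl⟩ := h
  rcases parity hab with ⟨ha0, hb0⟩|⟨ha0, hb0⟩
  · have hd0 : d.val % 3 ≠ 0 := by rcases parity hda with ⟨h1,h2⟩|⟨h1,h2⟩ <;> tauto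
    exact c4_helper a b c d hac hbd hab hbc hcd hda hb0 hd0
  · have hc0 : c.val % 3 ≠ 0 := by rcases parity hbc with ⟨h1,h2⟩|⟨h1,h2⟩ <;> tauto
    obtain ⟨k, hk, hq⟩ := c4_helper b c d a hbd (Ne.symm hac) hbc hcd hda hab hc0 ha0
    refine ⟨k, hk, ?_⟩
    rw [← hq, quad_rot]

lemma comb_cycle (q : ℕ) (hq : 1 ≤ q) (S : Finset ℕ) (hS : ∀ k ∈ S, k < 2*q)
    (hcon : ∀ k ∈ S, ((k+1) % (2*q)) ∉ S) :
    S.card ≤ q ∧ (S.card = q →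
      S = (Finset.range q).image (fun i => 2*i) ∨
      S = (Finset.range q).image (fun i => 2*i+1)) := by
  have hnc : ∀ k ∈ S, k+1 ∉ S := by
    intro k hk hk1
    have hb1 := hS _ hk1
    have hmod : (k+1) % (2*q) = k+1 := Nat.mod_eq_of_lt hb1
    exact hcon k hk (by rw [hmod]; exact hk1)
  have hinj : Set.InjOn (fun k => k/2) ↑S := by
    intro k hk k' hk' h
    simp only at h
    rcases Nat.lt_trichotomy k k' with hlt | he | hlt
    · have he2 : k' = k + 1 := by omega
      exact absurd (he2 ▸ hk') (hnc k hk)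
    · exact he
    · have he2 : k = k' + 1 := by omega
      exact absurd (he2 ▸ hk) (hnc k' hk')
  have hsub : S.image (fun k => k/2) ⊆ Finset.range q := by
    intro i hi
    simp only [Finset.mem_image, Finset.mem_range] at hi ⊢
    obtain ⟨k, hk, rfl⟩ := hi
    have := hS k hk; omega
  have hcard_le : S.card ≤ q := by
    have h1 : (S.image (fun k => k/2)).card = S.card := Finset.card_image_of_injOn hinj
    have h2 := Finset.card_le_card hsub
    simp only [Finset.card_range] at h2
    omega
  refine ⟨hcard_le, ?_⟩
  intro hq_eq
  have himg : S.image (fun k => k/2) = Finset.range q :=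
    Finset.eq_of_subset_of_card_le hsub
      (by rw [Finset.card_image_of_injOn hinj, hq_eq, Finset.card_range])
  have hpair : ∀ i < q, 2*i ∈ S ∨ 2*i+1 ∈ S := by
    intro i hi
    have hmem : i ∈ Finset.range q := Finset.mem_range.mpr hi
    rw [← himg] at hmem
    simp only [Finset.mem_image] at hmem
    obtain ⟨k, hk, hk2⟩ := hmem
    have : k = 2*i ∨ k = 2*i+1 := by omega
    rcases this with rfl|rfl
    · exact Or.inl hk
    · exact Or.inr hk
  have hprop : ∀ i, 2*i+1 ∈ S → ∀ j, i ≤ j → j < q → 2*j+1 ∈ S := by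
    intro i hi j hij
    induction j, hij using Nat.le_induction with
    | base => intro _; exact hi
    | succ j hij ih =>
      intro hjq
      have hj : 2*j+1 ∈ S := ih (by omega)
      have h2 : 2*j+2 ∉ S := hnc _ hj
      rcases hpair (j+1) hjq with h|h
      · have he : 2*(j+1) = 2*j+2 := by ring
        rw [he] at h
        exact absurd h h2
      · exact h
  by_cases h0 : 0 ∈ S
  · left
    have heven : ∀ i < q, 2*i ∈ S := by
      intro i hi
      rcases hpair i hi with h|h
      · exact h
      · exfalso
        have hm : 2*(q-1)+1 ∈ S := hprop i h (q-1) (by omega) (by omega)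
        have hz : (2*(q-1)+1+1) % (2*q) = 0 := by
          rw [show 2*(q-1)+1+1 = 2*q by omega, Nat.mod_self]
        exact (hz ▸ hcon _ hm) h0
    have hsub2 : (Finset.range q).image (fun i => 2*i) ⊆ S := by
      intro x hx
      simp only [Finset.mem_image, Finset.mem_range] at hx
      obtain ⟨i, hi, rfl⟩ := hx
      exact heven i hi
    refine (Finset.eq_of_subset_of_card_le hsub2 ?_).symm
    rw [hq_eq, Finset.card_image_of_injOn (fun x _ y _ h => by omega), Finset.card_range]
  · right
    have h1 : 1 ∈ S := by
      rcases hpair 0 hq with h|h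
      · simp only [Nat.mul_zero] at h; exact absurd h h0
      · simpa using h
    have hodd : ∀ i < q, 2*i+1 ∈ S := fun i hi =>
      hprop 0 (by simpa using h1) i (by omega) hi
    have hsub2 : (Finset.range q).image (fun i => 2*i+1) ⊆ S := by
      intro x hx
      simp only [Finset.mem_image, Finset.mem_range] at hx
      obtain ⟨i, hi, rfl⟩ := hx
      exact hodd i hi
    refine (Finset.eq_of_subset_of_card_le hsub2 ?_).symm
    rw [hq_eq, Finset.card_image_of_injOn (fun x _ y _ h => by omega), Finset.card_range]

lemma pack_main {t : ℕ} (Q : Finset (Finset (Sym2 (Fin (18*t+36)))))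
    (hQ : IsC4Packing (Gr t) Q) :
    Q.card ≤ 3*t+6 ∧ (Q.card = 3*t+6 → Q = Pev t ∨ Q = Pod t) := by
  classical
  set S := (Finset.range (6*t+12)).filter (fun k => cyc t k ∈ Q) with hSdef
  have hSbound : ∀ k ∈ S, k < 6*t+12 := fun k hk =>
    Finset.mem_range.mp (Finset.mem_filter.mp hk).1
  have hQS : Q = S.image (cyc t) := by
    apply Finset.Subset.antisymm
    · intro e he
      obtain ⟨k, hk, rfl⟩ := c4_eq_cyc (hQ.1 e he)
      exact Finset.mem_image.mpr ⟨k, Finset.mem_filter.mpr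
        ⟨Finset.mem_range.mpr hk, he⟩, rfl⟩
    · intro e he
      obtain ⟨k, hk, rfl⟩ := Finset.mem_image.mp he
      exact (Finset.mem_filter.mp hk).2
  have hinjS : Set.InjOn (cyc t) ↑S := fun k hk k' hk' h =>
    cyc_inj (hSbound k hk) (hSbound k' hk') h
  have hcard : Q.card = S.card := by rw [hQS, Finset.card_image_of_injOn hinjS]
  have hcon : ∀ k ∈ S, ((k+1) % (6*t+12)) ∉ S := by
    intro k hk hk1
    have hb := hSbound k hk
    have hkQ : cyc t k ∈ Q := (Finset.mem_filter.mp hk).2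
    have hk1Q : cyc t ((k+1) % (6*t+12)) ∈ Q := (Finset.mem_filter.mp hk1).2
    have hne : cyc t k ≠ cyc t ((k+1) % (6*t+12)) := by
      intro h
      have h2 := cyc_inj hb (modlt t (k+1)) h
      have h3 := succ_mod_facts t k hb
      omega
    have hx1 : vh t (k+1) ∈ EdgeSetVerts (cyc t k) :=
      mem_verts_cyc.mpr (Or.inr (Or.inr (Or.inl rfl)))
    have hveq : vh t (k+1) = vh t ((k+1) % (6*t+12)) := by
      apply Fin.ext
      simp only [vh]
      have hmm := Nat.mod_mod_of_dvd (k+1) (dvd_refl (6*t+12))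
      omega
    have hx2 : vh t (k+1) ∈ EdgeSetVerts (cyc t ((k+1) % (6*t+12))) :=
      mem_verts_cyc.mpr (Or.inl hveq)
    exact hQ.2 _ hkQ _ hk1Q hne _ hx1 hx2
  have h2q : 2*(3*t+6) = 6*t+12 := by ring
  obtain ⟨hle, heq⟩ := comb_cycle (3*t+6) (by omega) S
    (fun k hk => by have := hSbound k hk; omega)
    (fun k hk => by rw [h2q]; exact hcon k hk)
  constructor
  · omega
  · intro h36
    rcases heq (by omega) with hS|hS
    · left
      rw [hQS, hS, Finset.image_image]
      rfl
    · right
      rw [hQS, hS, Finset.image_image]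
      rfl

lemma pev_packing (t : ℕ) : IsC4Packing (Gr t) (Pev t) := by
  constructor
  · intro e he
    obtain ⟨i, hi, rfl⟩ := Finset.mem_image.mp he
    rw [Finset.mem_range] at hi
    exact isC4_cyc (by omega)
  · intro e he e' he' hne x hx hx'
    obtain ⟨i, hi, rfl⟩ := Finset.mem_image.mp he
    obtain ⟨j, hj, rfl⟩ := Finset.mem_image.mp he'
    rw [Finset.mem_range] at hi hj
    have hij : i ≠ j := by rintro rfl; exact hne rfl
    have e1 : (2*i) % (6*t+12) = 2*i := Nat.mod_eq_of_lt (by omega)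
    have e2 : (2*i+1) % (6*t+12) = 2*i+1 := Nat.mod_eq_of_lt (by omega)
    have e3 : (2*j) % (6*t+12) = 2*j := Nat.mod_eq_of_lt (by omega)
    have e4 : (2*j+1) % (6*t+12) = 2*j+1 := Nat.mod_eq_of_lt (by omega)
    rcases mem_verts_cyc.mp hx with rfl|rfl|rfl|rfl <;>
      rcases mem_verts_cyc.mp hx' with h|h|h|h <;>
      (have hv := congrArg Fin.val h; simp only [vh, va, vb] at hv; omega)

lemma pod_packing (t : ℕ) : IsC4Packing (Gr t) (Pod t) := by
  constructor
  · intro e he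
    obtain ⟨i, hi, rfl⟩ := Finset.mem_image.mp he
    rw [Finset.mem_range] at hi
    exact isC4_cyc (by omega)
  · intro e he e' he' hne x hx hx'
    obtain ⟨i, hi, rfl⟩ := Finset.mem_image.mp he
    obtain ⟨j, hj, rfl⟩ := Finset.mem_image.mp he'
    rw [Finset.mem_range] at hi hj
    have hij : i ≠ j := by rintro rfl; exact hne rfl
    have e1 : (2*i+1) % (6*t+12) = 2*i+1 := Nat.mod_eq_of_lt (by omega)
    have e3 : (2*j+1) % (6*t+12) = 2*j+1 := Nat.mod_eq_of_lt (by omega)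
    have e2 := succ_mod_facts t (2*i+1) (by omega)
    have e4 := succ_mod_facts t (2*j+1) (by omega)
    rcases mem_verts_cyc.mp hx with rfl|rfl|rfl|rfl <;>
      rcases mem_verts_cyc.mp hx' with h|h|h|h <;>
      (have hv := congrArg Fin.val h; simp only [vh, va, vb] at hv; omega)

lemma pev_card (t : ℕ) : (Pev t).card = 3*t+6 := by
  rw [Pev, Finset.card_image_of_injOn, Finset.card_range]
  intro i hi j hj h
  simp only [Finset.coe_range, Set.mem_Iio] at hi hj
  have := cyc_inj (t := t) (by omega) (by omega) h
  omega

lemma pod_card (t : ℕ) : (Pod t).card = 3*t+6 := by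
  rw [Pod, Finset.card_image_of_injOn, Finset.card_range]
  intro i hi j hj h
  simp only [Finset.coe_range, Set.mem_Iio] at hi hj
  have := cyc_inj (t := t) (by omega) (by omega) h
  omega

lemma pev_ne_pod (t : ℕ) : Pev t ≠ Pod t := by
  intro h
  have h0 : cyc t 0 ∈ Pev t :=
    Finset.mem_image.mpr ⟨0, Finset.mem_range.mpr (by omega), by norm_num⟩
  rw [h] at h0
  obtain ⟨i, hi, hc⟩ := Finset.mem_image.mp h0
  rw [Finset.mem_range] at hi
  have := cyc_inj (t := t) (by omega) (by omega) hc
  omega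

end CLitAux

/-- For every `r ≥ 2` there is a finite simple graph (CLit_r) with `2r` distinguished
vertices `v₁,…,v_r, v̄₁,…,v̄_r` such that it has exactly two `C₄`-packings `P₀, P₁` of
size `3r`, `P₀` covers all `v_i` and no `v̄_i`, `P₁` covers all `v̄_i` and no `v_i`,
and it has no `C₄`-packing of size greater than `3r`. -/
theorem exists_c4_literal_gadget (r : ℕ) (hr : 2 ≤ r) :
    ∃ (n : ℕ) (G : SimpleGraph (Fin n)) (d : Fin r ⊕ Fin r → Fin n),
      Function.Injective d ∧
      ∃ P₀ P₁ : Finset (Finset (Sym2 (Fin n))),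
        P₀ ≠ P₁ ∧
        IsC4Packing G P₀ ∧ IsC4Packing G P₁ ∧
        P₀.card = 3 * r ∧ P₁.card = 3 * r ∧
        (∀ Q : Finset (Finset (Sym2 (Fin n))), IsC4Packing G Q → Q.card = 3 * r →
          Q = P₀ ∨ Q = P₁) ∧
        (∀ i : Fin r, CoversC4 P₀ (d (Sum.inl i))) ∧
        (∀ i : Fin r, ¬ CoversC4 P₀ (d (Sum.inr i))) ∧
        (∀ i : Fin r, CoversC4 P₁ (d (Sum.inr i))) ∧
        (∀ i : Fin r, ¬ CoversC4 P₁ (d (Sum.inl i))) ∧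
        (∀ Q : Finset (Finset (Sym2 (Fin n))), IsC4Packing G Q → Q.card ≤ 3 * r) := by
  classical
  obtain ⟨t, rfl⟩ : ∃ t, r = t + 2 := ⟨r - 2, by omega⟩
  clear hr
  open CLitAux in
  refine ⟨18*t+36, Gr t,
    Sum.elim (fun i => va t (2*i.val)) (fun i => va t (2*i.val+1)),
    ?_, Pev t, Pod t,
    pev_ne_pod t, pev_packing t, pod_packing t,
    by rw [pev_card]; ring, by rw [pod_card]; ring, ?_, ?_, ?_, ?_, ?_, ?_⟩
  · -- injectivity of d
    intro x y h
    rcases x with i|i <;> rcases y with j|j <;>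
      (have hv := congrArg Fin.val h;
       simp only [Sum.elim_inl, Sum.elim_inr, CLitAux.va] at hv;
       have hi := i.isLt; have hj := j.isLt;
       have m1 : (2*(i:ℕ)) % (6*t+12) = 2*(i:ℕ) := Nat.mod_eq_of_lt (by omega);
       have m2 : (2*(i:ℕ)+1) % (6*t+12) = 2*(i:ℕ)+1 := Nat.mod_eq_of_lt (by omega);
       have m3 : (2*(j:ℕ)) % (6*t+12) = 2*(j:ℕ) := Nat.mod_eq_of_lt (by omega);
       have m4 : (2*(j:ℕ)+1) % (6*t+12) = 2*(j:ℕ)+1 := Nat.mod_eq_of_lt (by omega)) <;>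
      first
        | exact congrArg Sum.inl (Fin.ext (by omega))
        | exact congrArg Sum.inr (Fin.ext (by omega))
        | (exfalso; omega)
  · -- uniqueness of maximum packings
    intro Q hQ hcard
    exact (pack_main Q hQ).2 (by omega)
  · -- P₀ covers all the vᵢ
    intro i
    exact ⟨cyc t (2*i.val),
      Finset.mem_image.mpr ⟨i.val, Finset.mem_range.mpr (by have := i.isLt; omega), rfl⟩,
      mem_verts_cyc.mpr (Or.inr (Or.inl rfl))⟩
  · -- P₀ covers no v̄ᵢ
    intro i hcov
    obtain ⟨e, he, hx⟩ := hcov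
    obtain ⟨j, hj, rfl⟩ := Finset.mem_image.mp he
    rw [Finset.mem_range] at hj
    have hi := i.isLt
    have m2 : (2*(i:ℕ)+1) % (6*t+12) = 2*(i:ℕ)+1 := Nat.mod_eq_of_lt (by omega)
    have m3 : (2*j) % (6*t+12) = 2*j := Nat.mod_eq_of_lt (by omega)
    have m4 : (2*j+1) % (6*t+12) = 2*j+1 := Nat.mod_eq_of_lt (by omega)
    rcases mem_verts_cyc.mp hx with h|h|h|h <;>
      (have hv := congrArg Fin.val h;
       simp only [Sum.elim_inr, CLitAux.va, CLitAux.vh, CLitAux.vb] at hv; omega)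
  · -- P₁ covers all the v̄ᵢ
    intro i
    exact ⟨cyc t (2*i.val+1),
      Finset.mem_image.mpr ⟨i.val, Finset.mem_range.mpr (by have := i.isLt; omega), rfl⟩,
      mem_verts_cyc.mpr (Or.inr (Or.inl rfl))⟩
  · -- P₁ covers no vᵢ
    intro i hcov
    obtain ⟨e, he, hx⟩ := hcov
    obtain ⟨j, hj, rfl⟩ := Finset.mem_image.mp he
    rw [Finset.mem_range] at hj
    have hi := i.isLt
    have m2 : (2*(i:ℕ)) % (6*t+12) = 2*(i:ℕ) := Nat.mod_eq_of_lt (by omega)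
    have m3 : (2*j+1) % (6*t+12) = 2*j+1 := Nat.mod_eq_of_lt (by omega)
    have m4 := succ_mod_facts t (2*j+1) (by omega)
    rcases mem_verts_cyc.mp hx with h|h|h|h <;>
      (have hv := congrArg Fin.val h;
       simp only [Sum.elim_inl, CLitAux.va, CLitAux.vh, CLitAux.vb] at hv; omega)
  · -- no packing has more than 3r cycles
    intro Q hQ
    have := (pack_main Q hQ).1
    omega
end
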